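/- arXiv:0801.0939 — 6 statements merged into one kernel-verified Lean document; each statement's English description precedes it below -/
import Mathlib

section
/- For every integer d ≥ 2 there exists a convex polytope Q of dimension d (namely the prism Δ × I over a (d-1)-dimensional simplex Δ, where I is a line segment) such that the graph G_{d-2}(Q) is not (d+1)-vertex-connected: deleting the d nodes corresponding to the edges v × I of Q, where v ranges over the vertices of Δ, disconnects the graph. -/
open Set

/-- A convex polytope in `ℝ^N`: the convex hull of a finite set of points. -/
def IsPolytope {N : ℕ} (P : Set (EuclideanSpace ℝ (Fin N))) : Prop :=
  ∃ S : Set (EuclideanSpace ℝ (Fin N)), S.Finite ∧ P = convexHull ℝ S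

/-- The dimension of a subset of `ℝ^N`: the dimension of its affine hull. -/
noncomputable def sdim {N : ℕ} (P : Set (EuclideanSpace ℝ (Fin N))) : ℕ :=
  Module.finrank ℝ (affineSpan ℝ P).direction

/-- `F` is a face of `P` of dimension `k`: a nonempty exposed subset of `P`
(the set of minimizers over `P` of some linear functional) of dimension `k`. -/
def IsFaceDim {N : ℕ} (P F : Set (EuclideanSpace ℝ (Fin N))) (k : ℕ) : Prop :=
  IsExposed ℝ P F ∧ F.Nonempty ∧ sdim F = k

/-- The graph `G_k(P)` on the `k`-dimensional faces of `P`: two such faces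
are adjacent if some `(k+1)`-dimensional face of `P` contains both. -/
def faceGraph {N : ℕ} (P : Set (EuclideanSpace ℝ (Fin N))) (k : ℕ) :
    SimpleGraph {F : Set (EuclideanSpace ℝ (Fin N)) // IsFaceDim P F k} :=
  SimpleGraph.fromRel (fun F F' => ∃ G, IsFaceDim P G (k + 1) ∧ F.1 ⊆ G ∧ F'.1 ⊆ G)

/-- A graph is `m`-connected if it has at least `m+1` nodes and deleting any set
of at most `m-1` nodes (and incident edges) leaves a connected graph. -/
def MConnected {V : Type*} (G : SimpleGraph V) (m : ℕ) : Prop :=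
  m + 1 ≤ Nat.card V ∧
    ∀ S : Set V, S.Finite → S.ncard < m → (G.induce Sᶜ).Connected

/-!
The witness is the bipyramid `Q = conv {0, 𝟙, e₁, …, e_d}` over the simplex `conv {eᵢ}`, whose
apexes `0` and `𝟙 = ∑ eᵢ` lie on opposite sides of the hyperplane `∑ xᵢ = 1`. It is polar to the
prism `Δ × I`, the edges `v × I` of the prism corresponding to the `d` base ridges
`conv {eᵢ | i ≠ j}` of `Q`.

Every other ridge of `Q` contains an apex, and no proper face contains both apexes: a functional
maximized over `Q` at `0` and at `𝟙 = ∑ eᵢ` is maximized at every `eᵢ`. So two ridges that are not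
base ridges and lie in a common facet contain the same apex, and once the base ridges are deleted
no path joins the ridges through `0` to the ridges through `𝟙`.
-/

section Convex

variable {E : Type*} [AddCommGroup E] [Module ℝ E]

theorem eq_of_mem_affineSpan_of_forall_eq {F : Type*} [FunLike F E ℝ] [LinearMapClass F ℝ E ℝ]
    (l : F) {s : Set E} {c : ℝ} (hs : ∀ y ∈ s, l y = c) {x : E} (hx : x ∈ affineSpan ℝ s) :
    l x = c :=
  affineSpan_induction hx hs fun a u v w hu hv hw => by
    simp only [vsub_eq_sub, vadd_eq_add, map_add, map_smul, map_sub, hu, hv, hw, smul_eq_mul,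
      sub_self, mul_zero, zero_add]

variable [TopologicalSpace E]

theorem IsExposed.eq_convexHull_inter {s F : Set E} (hF : IsExposed ℝ (convexHull ℝ s) F) :
    F = convexHull ℝ (s ∩ F) := by
  rcases F.eq_empty_or_nonempty with rfl | hne
  · simp
  refine Subset.antisymm ?_ (convexHull_min inter_subset_right
    (hF.convex (convex_convexHull ℝ s)))
  obtain ⟨l, rfl⟩ := hF hne
  rintro x ⟨hx, hmax⟩
  obtain ⟨ι, _, w, z, hw0, hw1, hz, rfl⟩ := mem_convexHull_iff_exists_fintype.1 hx
  -- `l x` is a convex combination of the values `l (z i) ≤ l x`, so every `z i` of positive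
  -- weight is a maximizer too.
  have hgap : ∑ i, w i * (l (∑ j, w j • z j) - l (z i)) = 0 := by
    simp only [mul_sub, Finset.sum_sub_distrib, ← Finset.sum_mul, hw1, one_mul, map_sum,
      map_smul, smul_eq_mul, sub_self]
  have hface : ∀ i, w i ≠ 0 →
      z i ∈ s ∩ {x | x ∈ convexHull ℝ s ∧ ∀ y ∈ convexHull ℝ s, l y ≤ l x} := by
    intro i hi
    have := (Finset.sum_eq_zero_iff_of_nonneg fun j _ =>
      mul_nonneg (hw0 j) (sub_nonneg.2 (hmax _ (subset_convexHull ℝ s (hz j))))).1 hgap i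
      (Finset.mem_univ i)
    have heq : l (z i) = l (∑ j, w j • z j) :=
      (sub_eq_zero.1 ((mul_eq_zero.1 this).resolve_left hi)).symm
    exact ⟨hz i, subset_convexHull ℝ s (hz i), fun y hy => heq ▸ hmax y hy⟩
  classical
  rw [← Finset.sum_filter_of_ne fun i _ (h : w i • z i ≠ 0) => left_ne_zero_of_smul h]
  refine (convex_convexHull ℝ _).sum_mem (fun i _ => hw0 i) ?_ fun i hi =>
    subset_convexHull ℝ _ (hface i (Finset.mem_filter.1 hi).2)
  rwa [Finset.sum_filter_ne_zero]

theorem isExposed_convexHull_of_eq_of_lt {V W : Set E} (l : StrongDual ℝ E) {M : ℝ}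
    (hWV : W ⊆ V) (hW : ∀ x ∈ W, l x = M) (hV : ∀ x ∈ V, x ∉ W → l x < M) :
    IsExposed ℝ (convexHull ℝ V) (convexHull ℝ W) := by
  rcases W.eq_empty_or_nonempty with rfl | ⟨w, hw⟩
  · simpa using isExposed_empty
  have hle : ∀ x ∈ convexHull ℝ V, l x ≤ M := fun x hx => by
    refine convexHull_min (fun y hy => ?_) (convex_halfSpace_le (l : E →ₗ[ℝ] ℝ).isLinear M) hx
    by_cases hyW : y ∈ W
    exacts [(hW y hyW).le, (hV y hy hyW).le]
  have hF := ContinuousLinearMap.toExposed.isExposed (l := l) (A := convexHull ℝ V)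
  suffices V ∩ l.toExposed (convexHull ℝ V) = W by
    rwa [← this, ← hF.eq_convexHull_inter]
  ext x
  refine ⟨fun ⟨hxV, _, hmax⟩ => ?_, fun hxW => ⟨hWV hxW, subset_convexHull ℝ V (hWV hxW), ?_⟩⟩
  · by_contra hxW
    have := hmax w (subset_convexHull ℝ V (hWV hw))
    linarith [hW w hw, hV x hxV hxW]
  · exact fun y hy => hW x hxW ▸ hle y hy

end Convex

section Dimension

variable {N : ℕ}

theorem sdim_mono {s t : Set (EuclideanSpace ℝ (Fin N))} (hst : s ⊆ t) : sdim s ≤ sdim t :=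
  Submodule.finrank_mono (AffineSubspace.direction_le (affineSpan_mono ℝ hst))

theorem sdim_le (s : Set (EuclideanSpace ℝ (Fin N))) : sdim s ≤ N :=
  (Submodule.finrank_le _).trans finrank_euclideanSpace_fin.le

theorem sdim_convexHull_image {ι : Type*} {p : ι → EuclideanSpace ℝ (Fin N)}
    (hp : AffineIndependent ℝ p) (s : Finset ι) : sdim (convexHull ℝ (p '' s)) = s.card - 1 := by
  classical
  rcases s.eq_empty_or_nonempty with rfl | hs
  · simp [sdim]
  rw [sdim, affineSpan_convexHull, direction_affineSpan, ← Finset.coe_image]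
  exact hp.finrank_vectorSpan_image_finset (by have := hs.card_pos; omega)

end Dimension

theorem SimpleGraph.not_connected_of_adj_iff {V : Type*} {G : SimpleGraph V} (P : V → Prop)
    (hP : ∀ u v, G.Adj u v → (P u ↔ P v)) {a b : V} (ha : P a) (hb : ¬P b) : ¬G.Connected :=
  fun h => by
    obtain ⟨p⟩ := h.preconnected a b
    obtain ⟨e, -, he, he'⟩ := p.exists_boundary_dart {v | P v} ha hb
    exact he' ((hP _ _ e.adj).1 he)

namespace Bipyramid

variable {d : ℕ}

noncomputable def baseVertex (i : Fin d) : EuclideanSpace ℝ (Fin d) := EuclideanSpace.single i 1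

noncomputable def apex (d : ℕ) : EuclideanSpace ℝ (Fin d) := ∑ i, baseVertex i

noncomputable def pyramidVertex (a : EuclideanSpace ℝ (Fin d)) :
    Option (Fin d) → EuclideanSpace ℝ (Fin d) :=
  fun o => o.elim a baseVertex

@[simp]
theorem pyramidVertex_none (a : EuclideanSpace ℝ (Fin d)) : pyramidVertex a none = a := rfl

@[simp]
theorem pyramidVertex_some (a : EuclideanSpace ℝ (Fin d)) (i : Fin d) :
    pyramidVertex a (some i) = baseVertex i := rfl

noncomputable def vertices (d : ℕ) : Set (EuclideanSpace ℝ (Fin d)) :=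
  insert (apex d) (range (pyramidVertex 0))

noncomputable def polytope (d : ℕ) : Set (EuclideanSpace ℝ (Fin d)) := convexHull ℝ (vertices d)

noncomputable def baseRidge (j : Fin d) : Set (EuclideanSpace ℝ (Fin d)) :=
  convexHull ℝ (baseVertex '' ↑({j}ᶜ : Finset (Fin d)))

noncomputable def sideRidge (a : EuclideanSpace ℝ (Fin d)) (j₀ j₁ : Fin d) :
    Set (EuclideanSpace ℝ (Fin d)) :=
  convexHull ℝ (pyramidVertex a '' ↑({some j₀, some j₁}ᶜ : Finset (Option (Fin d))))

noncomputable def dot (c : Fin d → ℝ) : StrongDual ℝ (EuclideanSpace ℝ (Fin d)) :=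
  innerSL ℝ (WithLp.toLp 2 c)

@[simp]
theorem dot_baseVertex (c : Fin d → ℝ) (i : Fin d) : dot c (baseVertex i) = c i := by
  simp [dot, baseVertex, EuclideanSpace.inner_single_right]

@[simp]
theorem dot_apex (c : Fin d → ℝ) : dot c (apex d) = ∑ i, c i := by
  simp [apex, map_sum]

theorem forall_mem_vertices {P : EuclideanSpace ℝ (Fin d) → Prop} :
    (∀ x ∈ vertices d, P x) ↔ P (apex d) ∧ P 0 ∧ ∀ i, P (baseVertex i) := by
  simp only [vertices, forall_mem_insert, forall_mem_range, Option.forall]; rfl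

theorem pyramidVertex_zero_mem_vertices (o : Option (Fin d)) : pyramidVertex 0 o ∈ vertices d :=
  mem_insert_of_mem _ (mem_range_self o)

theorem isPolytope_polytope : IsPolytope (polytope d) :=
  ⟨vertices d, (finite_range _).insert _, rfl⟩

theorem affineIndependent_baseVertex : AffineIndependent ℝ (baseVertex (d := d)) := by
  have h : baseVertex = ⇑(EuclideanSpace.basisFun (Fin d) ℝ).toBasis := by
    ext i : 1
    simp [baseVertex]
  exact h ▸ (EuclideanSpace.basisFun (Fin d) ℝ).toBasis.linearIndependent.affineIndependent

theorem dot_one_eq_one_of_mem_affineSpan {x : EuclideanSpace ℝ (Fin d)}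
    (hx : x ∈ affineSpan ℝ (range baseVertex)) : dot 1 x = 1 :=
  eq_of_mem_affineSpan_of_forall_eq (dot 1) (by rintro _ ⟨i, rfl⟩; simp) hx

theorem affineIndependent_pyramidVertex {a : EuclideanSpace ℝ (Fin d)} (ha : dot 1 a ≠ 1) :
    AffineIndependent ℝ (pyramidVertex a) := by
  refine AffineIndependent.affineIndependent_of_notMem_span (i := none) ?_ fun h => ha ?_
  · let f : {o : Option (Fin d) // o ≠ none} ↪ Fin d :=
      ⟨fun o => o.1.get (Option.ne_none_iff_isSome.1 o.2), fun o o' h =>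
        Subtype.ext (Option.get_inj.1 h)⟩
    have hf : (fun o : {o // o ≠ none} => pyramidVertex a o) = baseVertex ∘ f := by
      funext ⟨o, h⟩
      cases o
      exacts [absurd rfl h, rfl]
    exact hf ▸ affineIndependent_baseVertex.comp_embedding f
  · refine dot_one_eq_one_of_mem_affineSpan (affineSpan_mono ℝ ?_ h)
    rintro _ ⟨_ | i, h, rfl⟩
    exacts [absurd rfl h, ⟨i, rfl⟩]

theorem sdim_polytope : sdim (polytope d) = d := by
  refine le_antisymm (sdim_le _) ?_
  have h := sdim_convexHull_image (affineIndependent_pyramidVertex (d := d) (a := 0) (by simp))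
    Finset.univ
  rw [Finset.coe_univ, image_univ, Finset.card_univ, Fintype.card_option,
    Nat.add_sub_cancel, Fintype.card_fin] at h
  calc d = sdim (convexHull ℝ (range (pyramidVertex 0))) := h.symm
    _ ≤ sdim (polytope d) := sdim_mono (convexHull_mono (subset_insert _ _))

theorem isExposed_baseRidge (j : Fin d) : IsExposed ℝ (polytope d) (baseRidge j) := by
  refine isExposed_convexHull_of_eq_of_lt (dot (1 - Pi.single j (d : ℝ))) (M := 1) ?_ ?_
    (forall_mem_vertices.2 ⟨fun _ => ?_, fun _ => ?_, fun i hi => ?_⟩)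
  · rintro _ ⟨i, -, rfl⟩
    exact pyramidVertex_zero_mem_vertices (some i)
  · rintro _ ⟨i, hi, rfl⟩
    simp_all
  · simp
  · simp
  · obtain rfl : i = j := by_contra fun h => hi ⟨i, by simpa using h, rfl⟩
    simpa using i.pos

theorem isExposed_sideRidge_zero (j₀ j₁ : Fin d) :
    IsExposed ℝ (polytope d) (sideRidge 0 j₀ j₁) := by
  refine isExposed_convexHull_of_eq_of_lt (dot (-(Pi.single j₀ 1 + Pi.single j₁ 1))) (M := 0)
    ?_ ?_ (forall_mem_vertices.2 ⟨fun _ => ?_, fun h => ?_, fun i hi => ?_⟩)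
  · rintro _ ⟨o, -, rfl⟩
    exact pyramidVertex_zero_mem_vertices o
  · rintro _ ⟨_ | i, hi, rfl⟩
    · simp
    · simp_all
  · simp [Finset.sum_add_distrib]
  · exact absurd ⟨none, by simp, rfl⟩ h
  · have : i = j₀ ∨ i = j₁ := by
      by_contra h
      exact hi ⟨some i, by simpa [and_comm] using h, rfl⟩
    rcases this with rfl | rfl <;> simp [Pi.single_apply] <;> split_ifs <;> norm_num

theorem isExposed_sideRidge_apex (hd : 2 ≤ d) (j₀ j₁ : Fin d) :
    IsExposed ℝ (polytope d) (sideRidge (apex d) j₀ j₁) := by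
  have hd' : (2 : ℝ) ≤ d := by exact_mod_cast hd
  -- at `apex d` this functional takes the value `2 d - 2 (d - 1) = 2`
  refine isExposed_convexHull_of_eq_of_lt
    (dot (2 - ((d : ℝ) - 1) • (Pi.single j₀ 1 + Pi.single j₁ 1))) (M := 2) ?_ ?_
    (forall_mem_vertices.2 ⟨fun h => ?_, fun _ => ?_, fun i hi => ?_⟩)
  · rintro _ ⟨_ | i, -, rfl⟩
    exacts [mem_insert _ _, pyramidVertex_zero_mem_vertices (some i)]
  · rintro _ ⟨_ | i, hi, rfl⟩
    · simp [Finset.sum_add_distrib, Finset.sum_sub_distrib, ← Finset.mul_sum]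
      ring
    · simp_all
  · exact absurd ⟨none, by simp, rfl⟩ h
  · simp
  · have : i = j₀ ∨ i = j₁ := by
      by_contra h
      exact hi ⟨some i, by simpa [and_comm] using h, rfl⟩
    rcases this with rfl | rfl <;> simp [Pi.single_apply] <;> split_ifs <;> nlinarith

theorem sdim_baseRidge (j : Fin d) : sdim (baseRidge j) = d - 2 := by
  rw [baseRidge, sdim_convexHull_image affineIndependent_baseVertex, Finset.card_compl,
    Finset.card_singleton, Fintype.card_fin]
  omega

theorem sdim_sideRidge {a : EuclideanSpace ℝ (Fin d)} (ha : dot 1 a ≠ 1) {j₀ j₁ : Fin d}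
    (h : j₀ ≠ j₁) : sdim (sideRidge a j₀ j₁) = d - 2 := by
  rw [sideRidge, sdim_convexHull_image (affineIndependent_pyramidVertex ha), Finset.card_compl,
    Finset.card_pair (by simpa), Fintype.card_option, Fintype.card_fin]
  omega

theorem self_mem_sideRidge (a : EuclideanSpace ℝ (Fin d)) (j₀ j₁ : Fin d) :
    a ∈ sideRidge a j₀ j₁ :=
  subset_convexHull ℝ _ ⟨none, by simp, rfl⟩

theorem isFaceDim_baseRidge (hd : 2 ≤ d) (j : Fin d) :
    IsFaceDim (polytope d) (baseRidge j) (d - 2) := by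
  have : Nontrivial (Fin d) := Fin.nontrivial_iff_two_le.2 hd
  obtain ⟨i, hi⟩ := exists_ne j
  exact ⟨isExposed_baseRidge j, ⟨_, subset_convexHull ℝ _ ⟨i, by simpa using hi, rfl⟩⟩,
    sdim_baseRidge j⟩

theorem dot_one_eq_one_of_mem_baseRidge {j : Fin d} {x : EuclideanSpace ℝ (Fin d)}
    (hx : x ∈ baseRidge j) : dot 1 x = 1 :=
  dot_one_eq_one_of_mem_affineSpan
    (affineSpan_mono ℝ (image_subset_range _ _) (convexHull_subset_affineSpan _ hx))

theorem baseVertex_notMem_baseRidge (j : Fin d) : baseVertex j ∉ baseRidge j := fun h => by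
  have := eq_of_mem_affineSpan_of_forall_eq (dot (Pi.single j 1)) (c := 0)
    (by rintro _ ⟨i, hi, rfl⟩; simp_all) (convexHull_subset_affineSpan _ h)
  simp at this

theorem baseRidge_injective : Function.Injective (baseRidge (d := d)) := fun j k h =>
  by_contra fun hjk => baseVertex_notMem_baseRidge k
    (h ▸ subset_convexHull ℝ _ ⟨k, by simpa using Ne.symm hjk, rfl⟩)

theorem eq_polytope_of_zero_mem_of_apex_mem {G : Set (EuclideanSpace ℝ (Fin d))}
    (hG : IsExposed ℝ (polytope d) G) (h0 : 0 ∈ G) (h1 : apex d ∈ G) : G = polytope d := by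
  obtain ⟨l, rfl⟩ := hG ⟨0, h0⟩
  have hle : ∀ i, l (baseVertex i) ≤ 0 := fun i => by
    simpa using h0.2 _ (subset_convexHull ℝ _ (pyramidVertex_zero_mem_vertices (some i)))
  have hsum : 0 ≤ ∑ i, l (baseVertex i) := by simpa [apex, map_sum] using h1.2 0 h0.1
  have hzero : ∀ i, l (baseVertex i) = 0 := fun i =>
    (Finset.sum_eq_zero_iff_of_nonpos fun i _ => hle i).1
      (le_antisymm (Finset.sum_nonpos fun i _ => hle i) hsum) i (Finset.mem_univ i)
  refine Subset.antisymm (fun x hx => hx.1) (convexHull_min ?_ (hG.convex (convex_convexHull ℝ _)))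
  refine forall_mem_vertices.2 ⟨h1, h0, fun i => ⟨subset_convexHull ℝ _ ?_, fun y hy => ?_⟩⟩
  · exact pyramidVertex_zero_mem_vertices (some i)
  · simpa [hzero i] using h0.2 y hy

theorem zero_mem_or_apex_mem (hd : 2 ≤ d) {u : Set (EuclideanSpace ℝ (Fin d))}
    (hu : IsFaceDim (polytope d) u (d - 2)) (hbase : ∀ j, u ≠ baseRidge j) :
    0 ∈ u ∨ apex d ∈ u := by
  classical
  by_contra! h
  obtain ⟨hexp, hne, hdim⟩ := hu
  set s : Finset (Fin d) := Finset.univ.filter fun i => baseVertex i ∈ u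
  have hverts : vertices d ∩ u = baseVertex '' ↑s := by
    ext x
    constructor
    · rintro ⟨rfl | ⟨_ | i, rfl⟩, hxu⟩
      exacts [absurd hxu h.2, absurd hxu h.1, ⟨i, by simpa [s] using hxu, rfl⟩]
    · rintro ⟨i, hi, rfl⟩
      exact ⟨pyramidVertex_zero_mem_vertices (some i), by simpa [s] using hi⟩
  have hu : u = convexHull ℝ (baseVertex '' ↑s) := hverts ▸ hexp.eq_convexHull_inter
  have hs : s.Nonempty := by
    rw [Finset.nonempty_iff_ne_empty]
    rintro hs
    simp [hs, hne.ne_empty] at hu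
  rw [hu, sdim_convexHull_image affineIndependent_baseVertex] at hdim
  have hcard : sᶜ.card = 1 := by
    rw [Finset.card_compl, Fintype.card_fin]
    have := hs.card_pos
    have := s.card_le_univ
    simp only [Fintype.card_fin] at this
    omega
  obtain ⟨j, hj⟩ := Finset.card_eq_one.1 hcard
  exact hbase j (by rw [hu, baseRidge, ← hj, compl_compl])

theorem zero_mem_iff_of_subset_face (hd : 2 ≤ d) {u v G : Set (EuclideanSpace ℝ (Fin d))}
    (hu : IsFaceDim (polytope d) u (d - 2)) (hu' : ∀ j, u ≠ baseRidge j)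
    (hv : IsFaceDim (polytope d) v (d - 2)) (hv' : ∀ j, v ≠ baseRidge j)
    (hG : IsFaceDim (polytope d) G (d - 2 + 1)) (huG : u ⊆ G) (hvG : v ⊆ G) :
    0 ∈ u ↔ 0 ∈ v := by
  have hG' : ¬(0 ∈ G ∧ apex d ∈ G) := fun ⟨h0, h1⟩ => by
    have := hG.2.2
    rw [eq_polytope_of_zero_mem_of_apex_mem hG.1 h0 h1, sdim_polytope] at this
    omega
  have := zero_mem_or_apex_mem hd hu hu'
  have := zero_mem_or_apex_mem hd hv hv'
  have := @huG 0
  have := @huG (apex d)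
  have := @hvG 0
  have := @hvG (apex d)
  tauto

noncomputable def baseRidgeNode (hd : 2 ≤ d) (j : Fin d) :
    {F : Set (EuclideanSpace ℝ (Fin d)) // IsFaceDim (polytope d) F (d - 2)} :=
  ⟨baseRidge j, isFaceDim_baseRidge hd j⟩

theorem baseRidgeNode_injective (hd : 2 ≤ d) : Function.Injective (baseRidgeNode hd) :=
  fun _ _ h => baseRidge_injective (congrArg Subtype.val h)

theorem mem_compl_range_baseRidgeNode_iff (hd : 2 ≤ d)
    {u : {F : Set (EuclideanSpace ℝ (Fin d)) // IsFaceDim (polytope d) F (d - 2)}} :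
    u ∈ (range (baseRidgeNode hd))ᶜ ↔ ∀ j, u.1 ≠ baseRidge j :=
  ⟨fun hu j h => hu ⟨j, Subtype.ext h.symm⟩, fun hu ⟨j, h⟩ => hu j (congrArg Subtype.val h).symm⟩

theorem not_connected_induce_compl_range_baseRidgeNode (hd : 2 ≤ d) :
    ¬((faceGraph (polytope d) (d - 2)).induce (range (baseRidgeNode hd))ᶜ).Connected := by
  have hj : (⟨0, by omega⟩ : Fin d) ≠ ⟨1, by omega⟩ := by simp [Fin.ext_iff]
  have hapex : dot 1 (apex d) ≠ 1 := by simp; omega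
  let lowerRidge : {F // IsFaceDim (polytope d) F (d - 2)} := ⟨sideRidge 0 _ _,
    isExposed_sideRidge_zero _ _, ⟨0, self_mem_sideRidge _ _ _⟩, sdim_sideRidge (by simp) hj⟩
  let upperRidge : {F // IsFaceDim (polytope d) F (d - 2)} := ⟨sideRidge (apex d) _ _,
    isExposed_sideRidge_apex hd _ _, ⟨_, self_mem_sideRidge _ _ _⟩, sdim_sideRidge hapex hj⟩
  have h0 : (0 : EuclideanSpace ℝ (Fin d)) ∈ lowerRidge.1 := self_mem_sideRidge _ _ _
  have h1 : apex d ∈ upperRidge.1 := self_mem_sideRidge _ _ _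
  have hlower : lowerRidge ∈ (range (baseRidgeNode hd))ᶜ :=
    (mem_compl_range_baseRidgeNode_iff hd).2 fun j h =>
      zero_ne_one ((map_zero (dot 1)).symm.trans (dot_one_eq_one_of_mem_baseRidge (h ▸ h0)))
  have hupper : upperRidge ∈ (range (baseRidgeNode hd))ᶜ :=
    (mem_compl_range_baseRidgeNode_iff hd).2 fun j h =>
      hapex (dot_one_eq_one_of_mem_baseRidge (h ▸ h1))
  refine SimpleGraph.not_connected_of_adj_iff (fun u => (0 : EuclideanSpace ℝ (Fin d)) ∈ u.1.1)
    ?_ (a := ⟨lowerRidge, hlower⟩) (b := ⟨upperRidge, hupper⟩) h0 fun h => ?_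
  · rintro ⟨u, hu⟩ ⟨v, hv⟩ ⟨-, ⟨G, hG, huG, hvG⟩ | ⟨G, hG, hvG, huG⟩⟩ <;>
      exact zero_mem_iff_of_subset_face hd u.2 ((mem_compl_range_baseRidgeNode_iff hd).1 hu) v.2
        ((mem_compl_range_baseRidgeNode_iff hd).1 hv) hG huG hvG
  · have := upperRidge.2.2.2
    rw [eq_polytope_of_zero_mem_of_apex_mem upperRidge.2.1 h h1, sdim_polytope] at this
    omega

end Bipyramid

/-- For every `d ≥ 2` there is a `d`-dimensional convex polytope `Q` (the prism
over a `(d-1)`-dimensional simplex) such that `G_{d-2}(Q)` is not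
`(d+1)`-vertex-connected: there is a set of `d` nodes whose deletion
disconnects the graph. -/
theorem stmt_2 (d : ℕ) (hd : 2 ≤ d) :
    ∃ (N : ℕ) (Q : Set (EuclideanSpace ℝ (Fin N))), IsPolytope Q ∧ sdim Q = d ∧
      (∃ S : Set {F : Set (EuclideanSpace ℝ (Fin N)) // IsFaceDim Q F (d - 2)},
        S.Finite ∧ S.ncard = d ∧ ¬ ((faceGraph Q (d - 2)).induce Sᶜ).Connected) ∧
      ¬ MConnected (faceGraph Q (d - 2)) (d + 1) := by
  have hcut := Bipyramid.not_connected_induce_compl_range_baseRidgeNode hd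
  have hcard : (range (Bipyramid.baseRidgeNode hd)).ncard = d := by
    rw [ncard_range_of_injective (Bipyramid.baseRidgeNode_injective hd), Nat.card_fin]
  exact ⟨d, Bipyramid.polytope d, Bipyramid.isPolytope_polytope, Bipyramid.sdim_polytope,
    ⟨_, finite_range _, hcard, hcut⟩, fun h => hcut (h.2 _ (finite_range _) (by omega))⟩
end

section
/- Let d and k be integers with 0 ≤ k ≤ d-1 and let P be a d-dimensional simplex (the convex hull of d+1 affinely independent points). Then every k-dimensional face of P has exactly (k+1)(d-k) neighbors in the graph G_k(P); consequently G_k(P) is not m-connected for any m > (k+1)(d-k). -/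
/-!
Let `S` be the `d + 1` affinely independent vertices of the simplex. A linear functional that
is maximal on a face is maximal at the vertices carrying positive barycentric weight, so the
nonempty exposed faces are exactly the hulls `conv T` of nonempty `T ⊆ S`; conversely an affine
function that vanishes on `T` and is `1` on `S \ T` exposes `conv T`. Moreover
`dim conv T = #T - 1` and `conv T ⊆ conv U ↔ T ⊆ U`. Hence the `k`-faces `conv T`, `conv T'` are
adjacent exactly when `#(T ∪ T') = k + 2`, i.e. when `T'` arises from `T` by exchanging one of
its `k + 1` vertices for one of the `d - k` vertices outside it. Deleting these `(k + 1)(d - k)`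
neighbours of a face isolates it from the other remaining faces, and when
`m > (k + 1)(d - k)` the `m + 1` faces leave at least one of those.
-/

open Set

open Finset

theorem Finset.card_filter_card_union_eq_succ {α : Type*} [DecidableEq α] {S T : Finset α}
    (hTS : T ⊆ S) :
    #{U ∈ S.powerset | #U = #T ∧ #(T ∪ U) = #T + 1} = #T * #(S \ T) := by
  have hswap : ∀ p ∈ T ×ˢ (S \ T), insert p.2 (T.erase p.1) \ T = {p.2} ∧
      T \ insert p.2 (T.erase p.1) = {p.1} := by
    intro p hp
    simp only [mem_product, mem_sdiff] at hp
    constructor <;> ext x <;> simp only [mem_sdiff, mem_insert, mem_erase, mem_singleton] <;>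
      grind
  -- `U` is `T` with one element `a ∈ T` exchanged for one `b ∈ S \ T`.
  have himage : {U ∈ S.powerset | #U = #T ∧ #(T ∪ U) = #T + 1} =
      (T ×ˢ (S \ T)).image fun p => insert p.2 (T.erase p.1) := by
    ext U
    simp only [mem_filter, mem_powerset, mem_image, mem_product, mem_sdiff, Prod.exists]
    constructor
    · rintro ⟨hUS, hU, hTU⟩
      have hUT := card_sdiff_add_card U T
      have hTU' := card_sdiff_add_card T U
      rw [union_comm] at hUT
      obtain ⟨b, hb⟩ := card_eq_one.1 (show #(U \ T) = 1 by omega)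
      obtain ⟨a, ha⟩ := card_eq_one.1 (show #(T \ U) = 1 by omega)
      have hbx (x) := congrArg (x ∈ ·) hb
      have hax (x) := congrArg (x ∈ ·) ha
      simp only [mem_sdiff, mem_singleton, eq_iff_iff] at hbx hax
      refine ⟨a, b, ⟨((hax a).2 rfl).1, hUS ((hbx b).2 rfl).1, ((hbx b).2 rfl).2⟩, ?_⟩
      ext x
      simp only [mem_insert, mem_erase]
      grind
    · rintro ⟨a, b, ⟨ha, hbS, hbT⟩, rfl⟩
      refine ⟨insert_subset hbS ((erase_subset a T).trans hTS), ?_, ?_⟩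
      · rw [card_insert_of_notMem (fun h => hbT (mem_of_mem_erase h)), card_erase_of_mem ha]
        have := card_pos.2 ⟨a, ha⟩
        omega
      · rw [union_insert, union_eq_left.2 (erase_subset a T), card_insert_of_notMem hbT]
  rw [himage, card_image_of_injOn, card_product]
  intro p hp q hq hpq
  obtain ⟨hp2, hp1⟩ := hswap p hp
  obtain ⟨hq2, hq1⟩ := hswap q hq
  simp only at hpq
  rw [hpq] at hp2 hp1
  exact Prod.ext (singleton_injective (hp1.symm.trans hq1))
    (singleton_injective (hp2.symm.trans hq2))

theorem AffineMap.sum_apply {ι k V1 P1 V2 : Type*} [Ring k] [AddCommGroup V1] [Module k V1]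
    [AddTorsor V1 P1] [AddCommGroup V2] [Module k V2] (s : Finset ι) (f : ι → P1 →ᵃ[k] V2)
    (x : P1) : (∑ i ∈ s, f i) x = ∑ i ∈ s, f i x :=
  map_sum (⟨⟨fun f => f x, rfl⟩, fun _ _ => rfl⟩ : (P1 →ᵃ[k] V2) →+ V2) f s

theorem AffineIndependent.exists_affineMap_eq {ι k V P : Type*} [Field k] [AddCommGroup V]
    [Module k V] [AddTorsor V P] [Fintype ι] {p : ι → P} (hp : AffineIndependent k p)
    (g : ι → k) : ∃ f : P →ᵃ[k] k, ∀ i, f (p i) = g i := by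
  classical
  obtain ⟨t, hpt, ht, hspan⟩ := exists_subset_affineIndependent_affineSpan_eq_top hp.range
  let b : AffineBasis t k P := ⟨(↑), ht, by rw [Subtype.range_coe]; exact hspan⟩
  refine ⟨∑ i, g i • b.coord ⟨p i, hpt (mem_range_self i)⟩, fun j => ?_⟩
  change (∑ i, g i • b.coord _) (b ⟨p j, hpt (mem_range_self j)⟩) = g j
  simp only [AffineMap.sum_apply, AffineMap.coe_smul, Pi.smul_apply, b.coord_apply,
    Subtype.mk.injEq, hp.injective.eq_iff, smul_eq_mul, mul_ite, mul_one, mul_zero,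
    Finset.sum_ite_eq', Finset.mem_univ, if_true]

section ConvexHull

variable {E : Type*} [AddCommGroup E] [Module ℝ E] {S T U : Finset E}

theorem convexHull_inter_eq_convexHull_filter {L : Type*} [FunLike L E ℝ]
    [LinearMapClass L ℝ E ℝ] (S : Finset E) (l : L) {c : ℝ}
    (hc : ∀ s ∈ S, l s ≤ c) :
    convexHull ℝ ↑S ∩ {x | l x = c} = convexHull ℝ ↑{s ∈ S | l s = c} := by
  refine Subset.antisymm ?_ <| convexHull_min (fun s hs => ?_) <|
    (convex_convexHull ℝ _).inter (convex_hyperplane ⟨map_add l, map_smul l⟩ c)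
  · rintro _ ⟨hx, hlx⟩
    obtain ⟨w, hw₀, hw₁, rfl⟩ := Finset.mem_convexHull'.1 hx
    have hzero : ∀ s ∈ S, w s * (c - l s) = 0 := by
      refine (sum_eq_zero_iff_of_nonneg fun s hs => ?_).1 ?_
      · exact mul_nonneg (hw₀ s hs) (sub_nonneg.2 (hc s hs))
      · simp only [mem_ofPred_eq, map_sum, map_smul, smul_eq_mul] at hlx
        simp only [mul_sub, sum_sub_distrib, ← sum_mul, hw₁, one_mul, hlx, sub_self]
    have hsupp : ∀ s ∈ S, w s ≠ 0 → l s = c := fun s hs hws =>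
      (sub_eq_zero.1 ((mul_eq_zero.1 (hzero s hs)).resolve_left hws)).symm
    refine Finset.mem_convexHull'.2 ⟨w, fun s hs => hw₀ s (mem_filter.1 hs).1, ?_, ?_⟩
    · rwa [sum_filter_of_ne hsupp]
    · exact sum_filter_of_ne fun s hs hws => hsupp s hs fun h => hws (by rw [h, zero_smul])
  · obtain ⟨hsS, hls⟩ := mem_filter.1 hs
    exact ⟨subset_convexHull ℝ _ hsS, hls⟩

theorem AffineIndependent.mem_of_mem_convexHull (hS : AffineIndependent ℝ ((↑) : S → E))
    (hT : T ⊆ S) {s : E} (hs : s ∈ S) (hsT : s ∈ convexHull ℝ (T : Set E)) : s ∈ T := by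
  classical
  have h := hS.convexHull_inter (t₁ := {s}) (singleton_subset_iff.2 hs) hT
  rw [coe_singleton, convexHull_singleton] at h
  have hne : (convexHull ℝ ({s} ∩ (T : Set E))).Nonempty := h ▸ ⟨s, rfl, hsT⟩
  simpa using convexHull_nonempty_iff.1 hne

theorem AffineIndependent.convexHull_subset_convexHull_iff
    (hS : AffineIndependent ℝ ((↑) : S → E)) (hT : T ⊆ S) (hU : U ⊆ S) :
    convexHull ℝ (T : Set E) ⊆ convexHull ℝ (U : Set E) ↔ T ⊆ U :=
  ⟨fun h _ ht => hS.mem_of_mem_convexHull hU (hT ht) (h (subset_convexHull ℝ _ ht)),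
    fun h => convexHull_mono (coe_subset.2 h)⟩

theorem AffineIndependent.convexHull_inj (hS : AffineIndependent ℝ ((↑) : S → E))
    (hT : T ⊆ S) (hU : U ⊆ S) :
    convexHull ℝ (T : Set E) = convexHull ℝ (U : Set E) ↔ T = U := by
  rw [Set.Subset.antisymm_iff, Finset.Subset.antisymm_iff,
    hS.convexHull_subset_convexHull_iff hT hU, hS.convexHull_subset_convexHull_iff hU hT]

end ConvexHull

section Exposed

variable {E : Type*} [AddCommGroup E] [Module ℝ E] [TopologicalSpace E]

theorem isExposed_inter_of_forall_le {A : Set E} (l : StrongDual ℝ E) {c : ℝ}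
    (hc : ∀ y ∈ A, l y ≤ c) : IsExposed ℝ A (A ∩ {x | l x = c}) := by
  rintro ⟨x₀, hx₀, hlx₀⟩
  refine ⟨l, Set.ext fun x => ⟨fun ⟨hx, hlx⟩ => ⟨hx, fun y hy => hlx ▸ hc y hy⟩,
    fun ⟨hx, hmax⟩ => ⟨hx, le_antisymm (hc x hx) (hlx₀ ▸ hmax x₀ hx₀)⟩⟩⟩

theorem IsExposed.exists_subset_eq_convexHull {S : Finset E} {F : Set E}
    (hF : IsExposed ℝ (convexHull ℝ (S : Set E)) F) (hne : F.Nonempty) :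
    ∃ T ⊆ S, F = convexHull ℝ (T : Set E) := by
  obtain ⟨l, rfl⟩ := hF hne
  obtain ⟨x₀, hx₀, hmax⟩ := hne
  refine ⟨{s ∈ S | l s = l x₀}, filter_subset _ _, ?_⟩
  rw [← convexHull_inter_eq_convexHull_filter S l
    fun s hs => hmax s (subset_convexHull ℝ _ hs)]
  exact Set.ext fun x => ⟨fun ⟨hx, hmaxx⟩ => ⟨hx, le_antisymm (hmax x hx) (hmaxx x₀ hx₀)⟩,
    fun ⟨hx, hlx⟩ => ⟨hx, fun y hy => (hmax y hy).trans_eq hlx.symm⟩⟩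

end Exposed

theorem AffineIndependent.isExposed_convexHull {E : Type*} [NormedAddCommGroup E]
    [NormedSpace ℝ E] [FiniteDimensional ℝ E] {S T : Finset E}
    (hS : AffineIndependent ℝ ((↑) : S → E)) (hT : T ⊆ S) :
    IsExposed ℝ (convexHull ℝ (S : Set E)) (convexHull ℝ (T : Set E)) := by
  classical
  obtain ⟨f, hf⟩ := hS.exists_affineMap_eq fun s => if (s : E) ∈ T then 0 else 1
  let l : StrongDual ℝ E := LinearMap.toContinuousLinearMap (-f.linear)
  have hl (x : E) : l x = f 0 - f x := by
    have := f.linearMap_vsub x 0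
    rw [vsub_eq_sub, sub_zero] at this
    simp [l, this]
  have hlS : ∀ s ∈ S, l s ≤ f 0 ∧ (l s = f 0 ↔ s ∈ T) := fun s hs => by
    have := hf ⟨s, hs⟩
    split_ifs at this with h <;> simp [hl, this, h]
  have hfilter : {s ∈ S | l s = f 0} = T := by
    ext s
    simp only [mem_filter]
    exact ⟨fun ⟨hs, h⟩ => (hlS s hs).2.1 h, fun h => ⟨hT h, (hlS s (hT h)).2.2 h⟩⟩
  have hle : ∀ y ∈ convexHull ℝ (S : Set E), l y ≤ f 0 := fun y hy =>
    convexHull_min (fun s hs => (hlS s hs).1) (convex_halfSpace_le ⟨map_add l, map_smul l⟩ _) hy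
  rw [← hfilter, ← convexHull_inter_eq_convexHull_filter S l fun s hs => (hlS s hs).1]
  exact isExposed_inter_of_forall_le l hle

theorem MConnected.le_ncard_neighborSet {V : Type*} {G : SimpleGraph V} {m : ℕ}
    (h : MConnected G m) (v : V) : m ≤ (G.neighborSet v).ncard := by
  obtain ⟨hcard, hconn⟩ := h
  have : Finite V := (Nat.card_pos_iff.1 (by omega)).2
  by_contra! hlt
  set A := G.neighborSet v
  have : Nontrivial ↥Aᶜ := by
    rw [Set.nontrivial_coe_sort, ← Set.one_lt_ncard_iff_nontrivial]
    have := Set.ncard_add_ncard_compl A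
    omega
  obtain ⟨u, hvu⟩ := (hconn A A.toFinite hlt).preconnected.exists_adj_of_nontrivial
    ⟨v, G.irrefl⟩
  exact u.2 hvu

section Simplex

variable {N : ℕ}

local notation "E" => EuclideanSpace ℝ (Fin N)

theorem sdim_convexHull {T : Finset E} (hT : AffineIndependent ℝ ((↑) : T → E))
    {n : ℕ} (hn : #T = n + 1) : sdim (convexHull ℝ (T : Set E)) = n := by
  rw [sdim, affineSpan_convexHull, direction_affineSpan, ← Subtype.range_coe (s := (T : Set E))]
  exact hT.finrank_vectorSpan (by simpa using hn)

theorem isFaceDim_convexHull_iff {S : Finset E} (hS : AffineIndependent ℝ ((↑) : S → E))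
    {F : Set E} {k : ℕ} :
    IsFaceDim (convexHull ℝ (S : Set E)) F k ↔
      ∃ T ⊆ S, #T = k + 1 ∧ F = convexHull ℝ (T : Set E) := by
  have hsub {T} (hT : T ⊆ S) : AffineIndependent ℝ ((↑) : T → E) :=
    hS.mono (coe_subset.2 hT)
  constructor
  · rintro ⟨hexp, hne, hdim⟩
    obtain ⟨T, hTS, rfl⟩ := hexp.exists_subset_eq_convexHull hne
    obtain ⟨n, hn⟩ := Nat.exists_eq_add_one.2 (card_pos.2 (by simpa using hne))
    exact ⟨T, hTS, by rw [hn, ← hdim, sdim_convexHull (hsub hTS) hn], rfl⟩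
  · rintro ⟨T, hTS, hT, rfl⟩
    exact ⟨hS.isExposed_convexHull hTS, by simpa using card_pos.1 (by omega),
      sdim_convexHull (hsub hTS) hT⟩

theorem exists_isFaceDim_superset_iff {S T T' : Finset E}
    (hS : AffineIndependent ℝ ((↑) : S → E)) (hT : T ⊆ S) (hT' : T' ⊆ S)
    {k : ℕ} :
    (∃ G, IsFaceDim (convexHull ℝ (S : Set E)) G (k + 1) ∧
        convexHull ℝ (T : Set E) ⊆ G ∧
        convexHull ℝ (T' : Set E) ⊆ G) ↔
      ∃ U ⊆ S, #U = k + 2 ∧ T ∪ T' ⊆ U := by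
  simp only [isFaceDim_convexHull_iff hS]
  constructor
  · rintro ⟨_, ⟨U, hUS, hU, rfl⟩, hTU, hT'U⟩
    exact ⟨U, hUS, hU, union_subset ((hS.convexHull_subset_convexHull_iff hT hUS).1 hTU)
      ((hS.convexHull_subset_convexHull_iff hT' hUS).1 hT'U)⟩
  · rintro ⟨U, hUS, hU, hTU⟩
    exact ⟨_, ⟨U, hUS, hU, rfl⟩, convexHull_mono (coe_subset.2 (subset_union_left.trans hTU)),
      convexHull_mono (coe_subset.2 (subset_union_right.trans hTU))⟩

theorem faceGraph_convexHull_adj_iff {S T T' : Finset E}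
    (hS : AffineIndependent ℝ ((↑) : S → E)) {k : ℕ}
    {F F' : {F // IsFaceDim (convexHull ℝ (S : Set E)) F k}}
    (hT : T ⊆ S) (hT' : T' ⊆ S) (hTk : #T = k + 1) (hT'k : #T' = k + 1)
    (hF : F.1 = convexHull ℝ (T : Set E))
    (hF' : F'.1 = convexHull ℝ (T' : Set E)) :
    (faceGraph (convexHull ℝ (S : Set E)) k).Adj F F' ↔
      #(T ∪ T') = k + 2 := by
  have hne : F ≠ F' ↔ T ≠ T' := by rw [Ne, Subtype.ext_iff, hF, hF', hS.convexHull_inj hT hT']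
  rw [faceGraph, SimpleGraph.fromRel_adj, hne, hF, hF', exists_isFaceDim_superset_iff hS hT hT',
    exists_isFaceDim_superset_iff hS hT' hT, union_comm T', or_self]
  constructor
  · rintro ⟨hTT', U, -, hU, hTU⟩
    have hlt : k + 1 < #(T ∪ T') := by
      by_contra! h
      exact hTT' ((eq_of_subset_of_card_le subset_union_left (hTk ▸ h)).trans
        (eq_of_subset_of_card_le subset_union_right (hT'k ▸ h)).symm)
    have := Finset.card_le_card hTU
    omega
  · intro h
    refine ⟨fun hTT' => ?_, T ∪ T', union_subset hT hT', h, subset_rfl⟩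
    rw [hTT', Finset.union_self] at h
    omega

theorem ncard_neighborSet_faceGraph_convexHull {S : Finset E}
    (hS : AffineIndependent ℝ ((↑) : S → E)) {k : ℕ}
    (F : {F // IsFaceDim (convexHull ℝ (S : Set E)) F k}) :
    ((faceGraph (convexHull ℝ (S : Set E)) k).neighborSet F).ncard =
      (k + 1) * (#S - (k + 1)) := by
  obtain ⟨T, hTS, hTk, hF⟩ := (isFaceDim_convexHull_iff hS).1 F.2
  have himage : Subtype.val '' (faceGraph _ k).neighborSet F =
      (fun U : Finset E => convexHull ℝ (U : Set E)) ''
        ↑({U ∈ S.powerset | #U = #T ∧ #(T ∪ U) = #T + 1} : Finset (Finset E)) := by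
    ext G
    simp only [Set.mem_image, SimpleGraph.mem_neighborSet, coe_filter, Set.mem_ofPred_eq,
      Finset.mem_powerset, hTk]
    constructor
    · rintro ⟨F', hadj, rfl⟩
      obtain ⟨T', hT'S, hT'k, hF'⟩ := (isFaceDim_convexHull_iff hS).1 F'.2
      rw [faceGraph_convexHull_adj_iff hS hTS hT'S hTk hT'k hF hF'] at hadj
      exact ⟨T', ⟨hT'S, hT'k, hadj⟩, hF'.symm⟩
    · rintro ⟨T', ⟨hT'S, hT'k, hunion⟩, rfl⟩
      exact ⟨⟨_, (isFaceDim_convexHull_iff hS).2 ⟨T', hT'S, hT'k, rfl⟩⟩,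
        (faceGraph_convexHull_adj_iff hS hTS hT'S hTk hT'k hF rfl).2 hunion, rfl⟩
  rw [← Set.ncard_image_of_injective _ Subtype.val_injective, himage, Set.InjOn.ncard_image,
    ncard_coe_finset, card_filter_card_union_eq_succ hTS, card_sdiff_of_subset hTS, hTk]
  intro U hU U' hU' h
  simp only [coe_filter, Finset.mem_powerset, Set.mem_ofPred_eq] at hU hU'
  exact (hS.convexHull_inj hU.1 hU'.1).1 h

end Simplex

theorem stmt_5_general (d k : ℕ) {N : ℕ}
    (S : Finset (EuclideanSpace ℝ (Fin N))) (hcard : S.card = d + 1)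
    (hind : AffineIndependent ℝ (fun x : S => (x : EuclideanSpace ℝ (Fin N))))
    (P : Set (EuclideanSpace ℝ (Fin N))) (hP : P = convexHull ℝ (S : Set (EuclideanSpace ℝ (Fin N)))) :
    (∀ F : {F : Set (EuclideanSpace ℝ (Fin N)) // IsFaceDim P F k},
      ((faceGraph P k).neighborSet F).ncard = (k + 1) * (d - k)) ∧
    (∀ m : ℕ, (k + 1) * (d - k) < m → ¬ MConnected (faceGraph P k) m) := by
  subst hP
  have hdegree := fun F => (ncard_neighborSet_faceGraph_convexHull (k := k) hind F).trans
    (by rw [hcard, Nat.add_sub_add_right])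
  refine ⟨hdegree, fun m hm hconn => ?_⟩
  obtain ⟨F⟩ := (Nat.card_pos_iff.1 ((Nat.succ_pos m).trans_le hconn.1)).1
  exact (hconn.le_ncard_neighborSet F).not_gt (hdegree F ▸ hm)

/-- If `P` is a `d`-dimensional simplex and `0 ≤ k ≤ d-1`, then every
`k`-dimensional face of `P` has exactly `(k+1)(d-k)` neighbors in `G_k(P)`;
consequently `G_k(P)` is not `m`-connected for any `m > (k+1)(d-k)`. -/
theorem stmt_5 (d k : ℕ) (hk : k < d) {N : ℕ}
    (S : Finset (EuclideanSpace ℝ (Fin N))) (hcard : S.card = d + 1)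
    (hind : AffineIndependent ℝ (fun x : S => (x : EuclideanSpace ℝ (Fin N))))
    (P : Set (EuclideanSpace ℝ (Fin N))) (hP : P = convexHull ℝ (S : Set (EuclideanSpace ℝ (Fin N)))) :
    (∀ F : {F : Set (EuclideanSpace ℝ (Fin N)) // IsFaceDim P F k},
      ((faceGraph P k).neighborSet F).ncard = (k + 1) * (d - k)) ∧
    (∀ m : ℕ, (k + 1) * (d - k) < m → ¬ MConnected (faceGraph P k) m) :=
  stmt_5_general d k S hcard hind P hP
end

section
/- Let P be a convex polytope of dimension d and let 0 ≤ k ≤ d-1. Then every k-dimensional face of P is contained in at least d-k faces of P of dimension k+1. -/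
/-!
Let `F` be exposed by `l`, pick `z ∈ F` and a linear map `π` whose kernel is the direction of `F`.
Dividing `π (v - z)` by the height `l z - l v` for the vertices `v ∉ F` of `P` and taking the
convex hull gives the face figure `P / F`. Each `π (p - z)` with `p ∈ P` is a nonnegative multiple
of a point of `P / F`, so the vertices of `P / F` span the image under `π` of the direction of `P`,
of dimension `dim P - dim F`; hence there are at least that many. A vertex `q`, exposed by `f`,
yields the face `{p ∈ P | π (p - z) = (l z - l p) • q}` of `P`, exposed by `f ∘ π + f q • l`: it
contains `F`, `π` maps its direction onto `ℝ q`, so it has dimension `dim F + 1`, and distinct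
vertices give distinct faces.
-/

open Set

open Module

theorem Submodule.finrank_map_add_finrank_ker {K M M₂ : Type*} [DivisionRing K] [AddCommGroup M]
    [Module K M] [AddCommGroup M₂] [Module K M₂] [FiniteDimensional K M] {f : M →ₗ[K] M₂}
    {S : Submodule K M} (h : f.ker ≤ S) :
    finrank K (S.map f) + finrank K f.ker = finrank K S := by
  have := (f.domRestrict S).finrank_range_add_finrank_ker
  rwa [LinearMap.range_domRestrict, LinearMap.ker_domRestrict,
    (Submodule.comapSubtypeEquivOfLe h).finrank_eq] at this

theorem vectorSpan_toExposed_le_ker {E : Type*} [AddCommGroup E] [Module ℝ E] [TopologicalSpace E]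
    (l : StrongDual ℝ E) (A : Set E) : vectorSpan ℝ (l.toExposed A) ≤ (l : E →ₗ[ℝ] ℝ).ker := by
  rw [vectorSpan_def, Submodule.span_le]
  rintro _ ⟨a, ha, b, hb, rfl⟩
  simp [le_antisymm (hb.2 a ha.1) (ha.2 b hb.1)]

theorem finrank_span_le_ncard {K M : Type*} [DivisionRing K] [AddCommGroup M] [Module K M]
    {s : Set M} (hs : s.Finite) : finrank K (Submodule.span K s) ≤ s.ncard := by
  have := finrank_span_finset_le_card (R := K) hs.toFinset
  rwa [Set.finrank, hs.coe_toFinset, ← Set.ncard_eq_toFinset_card s hs] at this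

section Polytope

variable {E : Type*} [NormedAddCommGroup E] [NormedSpace ℝ E] {s G : Set E}

theorem Convex.convexHull_extremePoints_of_finite {K : Set E} (hKconv : Convex ℝ K)
    (hK : IsCompact K) (hfin : (K.extremePoints ℝ).Finite) :
    convexHull ℝ (K.extremePoints ℝ) = K :=
  (hfin.isClosed_convexHull ℝ).closure_eq.symm.trans (closure_convexHull_extremePoints hK hKconv)

theorem extremePoints_subset_of_isExposed_convexHull (hG : IsExposed ℝ (convexHull ℝ s) G) :
    G.extremePoints ℝ ⊆ s :=
  hG.isExtreme.extremePoints_subset_extremePoints.trans extremePoints_convexHull_subset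

theorem IsExposed.eq_convexHull_inter_s7 (hs : s.Finite) (hG : IsExposed ℝ (convexHull ℝ s) G) :
    G = convexHull ℝ (s ∩ G) := by
  have hext := extremePoints_subset_of_isExposed_convexHull hG
  have hGconv : Convex ℝ G := hG.convex (convex_convexHull ℝ s)
  refine (convexHull_min inter_subset_right hGconv).antisymm' ?_
  calc G = convexHull ℝ (G.extremePoints ℝ) := (hGconv.convexHull_extremePoints_of_finite
        (hG.isCompact (hs.isCompact_convexHull ℝ)) (hs.subset hext)).symm
    _ ⊆ convexHull ℝ (s ∩ G) := convexHull_mono (subset_inter hext extremePoints_subset)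

theorem Set.Finite.setOf_isExposed_convexHull (hs : s.Finite) :
    {G | IsExposed ℝ (convexHull ℝ s) G}.Finite :=
  (hs.finite_subsets.image (convexHull ℝ)).subset fun G hG =>
    ⟨s ∩ G, inter_subset_left, (hG.eq_convexHull_inter_s7 hs).symm⟩

theorem Set.Finite.extremePoints_convexHull_subset_exposedPoints (hs : s.Finite) :
    (convexHull ℝ s).extremePoints ℝ ⊆ (convexHull ℝ s).exposedPoints ℝ := by
  intro q hq
  have hq_notMem : q ∉ convexHull ℝ (s \ {q}) := fun h =>
    ((convex_convexHull ℝ s).mem_extremePoints_iff_mem_sdiff_convexHull_sdiff.1 hq).2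
      (convexHull_mono (sdiff_subset_sdiff_left (subset_convexHull ℝ s)) h)
  obtain ⟨f, u, hfu, huq⟩ := geometric_hahn_banach_closed_point (convex_convexHull ℝ _)
    (hs.sdiff.isClosed_convexHull ℝ) hq_notMem
  have hfs : ∀ v ∈ s, v ≠ q → f v < f q := fun v hv hvq =>
    (hfu v (subset_convexHull ℝ _ ⟨hv, hvq⟩)).trans huq
  have hle : ∀ y ∈ convexHull ℝ s, f y ≤ f q := by
    refine convexHull_min (fun v hv => ?_) (convex_halfSpace_le f.isLinear (f q))
    rcases eq_or_ne v q with rfl | hvq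
    exacts [le_refl (f v), (hfs v hv hvq).le]
  -- the face exposed by `f` is the hull of the points of `s` on it, and `q` is the only one
  have hface : f.toExposed (convexHull ℝ s) ⊆ {q} := by
    rw [ContinuousLinearMap.toExposed.isExposed.eq_convexHull_inter_s7 hs]
    refine (convexHull_mono ?_).trans (convexHull_singleton q).subset
    rintro v ⟨hv, hvf⟩
    by_contra hvq
    exact (hfs v hv hvq).not_ge (hvf.2 q hq.1)
  exact ⟨hq.1, f, fun y hy => ⟨hle y hy, fun hqy =>
    hface ⟨hy, fun w hw => (hle w hw).trans hqy⟩⟩⟩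

end Polytope

section FaceFigure

variable {E V : Type*} [NormedAddCommGroup E] [NormedSpace ℝ E] [NormedAddCommGroup V]
  [NormedSpace ℝ V]

def faceFigure (l : StrongDual ℝ E) (π : E →L[ℝ] V) (z : E) (T : Finset E) : Set V :=
  convexHull ℝ ((fun v => (l z - l v)⁻¹ • π (v - z)) '' {v ∈ (T : Set E) | l v < l z})

def faceOver (l : StrongDual ℝ E) (π : E →L[ℝ] V) (z : E) (P : Set E) (q : V) : Set E :=
  {p ∈ P | π (p - z) = (l z - l p) • q}

variable {l : StrongDual ℝ E} {π : E →L[ℝ] V} {z : E} {T : Finset E}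

theorem sub_smul_inv_smul_apply_sub {A : Set E} (hz : z ∈ l.toExposed A)
    (hπ : ∀ x ∈ l.toExposed A, π (x - z) = 0) {p : E} (hp : p ∈ A) :
    (l z - l p) • (l z - l p)⁻¹ • π (p - z) = π (p - z) := by
  rcases (hz.2 p hp).lt_or_eq with hlt | heq
  · exact smul_inv_smul₀ (sub_ne_zero.2 hlt.ne') _
  · rw [hπ p ⟨hp, fun y hy => heq ▸ hz.2 y hy⟩, smul_zero, smul_zero]

theorem inv_smul_apply_sub_mem_faceFigure (hz : z ∈ l.toExposed (convexHull ℝ ↑T))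
    (hπ : ∀ x ∈ l.toExposed (convexHull ℝ ↑T), π (x - z) = 0) {p : E}
    (hp : p ∈ convexHull ℝ ↑T) (hlp : l p < l z) :
    (l z - l p)⁻¹ • π (p - z) ∈ faceFigure l π z T := by
  classical
  obtain ⟨w, hw₀, hw₁, rfl⟩ := Finset.mem_convexHull'.1 hp
  set a : E → ℝ := fun v => w v * (l z - l v)
  set g : E → V := fun v => (l z - l v)⁻¹ • π (v - z)
  have hsum : ∑ v ∈ T, a v = l z - l (∑ v ∈ T, w v • v) := by
    simp only [a, map_sum, map_smul, smul_eq_mul, mul_sub, Finset.sum_sub_distrib,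
      ← Finset.sum_mul, hw₁, one_mul]
  have hcomb : ∑ v ∈ T, a v • g v = π (∑ v ∈ T, w v • v - z) := by
    calc ∑ v ∈ T, a v • g v = ∑ v ∈ T, w v • π (v - z) :=
          Finset.sum_congr rfl fun v hv => by
            rw [mul_smul, sub_smul_inv_smul_apply_sub hz hπ (subset_convexHull ℝ _ hv)]
      _ = π (∑ v ∈ T, w v • v - z) := by
          simp only [map_sub, map_sum, map_smul, smul_sub, Finset.sum_sub_distrib,
            ← Finset.sum_smul, hw₁, one_smul]
  have hcm : T.centerMass a g = (l z - l (∑ v ∈ T, w v • v))⁻¹ • π (∑ v ∈ T, w v • v - z) := by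
    rw [Finset.centerMass, hsum, hcomb]
  rw [← hcm, ← Finset.centerMass_filter_ne_zero, faceFigure]
  have hlz : ∀ v ∈ T, l v ≤ l z := fun v hv => hz.2 v (subset_convexHull ℝ _ hv)
  refine Finset.centerMass_mem_convexHull _ (fun v hv => ?_) ?_ (fun v hv => ?_)
  · have hvT := (Finset.mem_filter.1 hv).1
    exact mul_nonneg (hw₀ v hvT) (sub_nonneg.2 (hlz v hvT))
  · rwa [Finset.sum_filter_ne_zero, hsum, sub_pos]
  · obtain ⟨hvT, hav⟩ := Finset.mem_filter.1 hv
    have hlv : l v < l z := (hlz v hvT).lt_of_ne fun h => hav (by simp [a, h])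
    exact ⟨v, ⟨hvT, hlv⟩, rfl⟩

theorem map_sub_eq_zero_of_ker_eq {A : Set E} (hker : (π : E →ₗ[ℝ] V).ker = vectorSpan ℝ A)
    (hz : z ∈ A) : ∀ x ∈ A, π (x - z) = 0 := fun x hx =>
  (hker ▸ vsub_mem_vectorSpan ℝ hx hz : x - z ∈ (π : E →ₗ[ℝ] V).ker)

theorem toExposed_subset_faceOver {A : Set E} (hz : z ∈ l.toExposed A)
    (hπ : ∀ x ∈ l.toExposed A, π (x - z) = 0) (q : V) : l.toExposed A ⊆ faceOver l π z A q :=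
  fun p hp => ⟨hp.1, by rw [hπ p hp, le_antisymm (hz.2 p hp.1) (hp.2 z hz.1), sub_self, zero_smul]⟩

theorem exists_mem_faceOver_of_mem_extremePoints {q : V}
    (hq : q ∈ (faceFigure l π z T).extremePoints ℝ) :
    ∃ v ∈ T, l v < l z ∧ v ∈ faceOver l π z (convexHull ℝ ↑T) q := by
  obtain ⟨v, ⟨hvT, hlv⟩, rfl⟩ := extremePoints_convexHull_subset hq
  exact ⟨v, hvT, hlv, subset_convexHull ℝ _ hvT, (smul_inv_smul₀ (sub_ne_zero.2 hlv.ne') _).symm⟩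

theorem faceOver_eq_toExposed (hz : z ∈ l.toExposed (convexHull ℝ ↑T))
    (hπ : ∀ x ∈ l.toExposed (convexHull ℝ ↑T), π (x - z) = 0) {q : V} (f : StrongDual ℝ V)
    (hf : ∀ y ∈ faceFigure l π z T, f y ≤ f q ∧ (f q ≤ f y → y = q)) :
    faceOver l π z (convexHull ℝ ↑T) q = (f.comp π + f q • l).toExposed (convexHull ℝ ↑T) := by
  set φ := f.comp π + f q • l
  -- for `l p < l z`, `φ p - φ z = (l z - l p) * (f y - f q)` with `y` the point of `P / F` over `p`
  have hφ : ∀ p, φ p - φ z = f (π (p - z)) - (l z - l p) * f q := fun p => by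
    simp only [add_apply, ContinuousLinearMap.comp_apply, smul_apply, smul_eq_mul, map_sub, φ]
    ring
  have key : ∀ p ∈ convexHull ℝ ↑T,
      φ p ≤ φ z ∧ (φ z ≤ φ p → p ∈ faceOver l π z (convexHull ℝ ↑T) q) := by
    intro p hp
    rcases (hz.2 p hp).lt_or_eq with hlt | heq
    · set y := (l z - l p)⁻¹ • π (p - z)
      have hpos : 0 < l z - l p := sub_pos.2 hlt
      have hpy : π (p - z) = (l z - l p) • y := (smul_inv_smul₀ hpos.ne' _).symm
      obtain ⟨hfy, hfq⟩ := hf y (inv_smul_apply_sub_mem_faceFigure hz hπ hp hlt)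
      have hφp : φ p - φ z = (l z - l p) * (f y - f q) := by
        rw [hφ, hpy, map_smul, smul_eq_mul]; ring
      refine ⟨by nlinarith, fun h => ⟨hp, ?_⟩⟩
      rw [hpy, hfq (by nlinarith)]
    · have h0 : π (p - z) = 0 := hπ p ⟨hp, fun y hy => heq ▸ hz.2 y hy⟩
      have hφp := hφ p
      rw [h0, heq, map_zero, sub_self, zero_mul, sub_zero, sub_eq_zero] at hφp
      exact ⟨hφp.le, fun _ => ⟨hp, by rw [h0, heq, sub_self, zero_smul]⟩⟩
  ext p
  constructor
  · rintro ⟨hp, hpq⟩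
    have hφp := hφ p
    rw [hpq, map_smul, smul_eq_mul, sub_self, sub_eq_zero] at hφp
    exact ⟨hp, fun y hy => hφp ▸ (key y hy).1⟩
  · rintro ⟨hp, hmax⟩
    exact (key p hp).2 (hmax z hz.1)

theorem isExposed_faceOver (hz : z ∈ l.toExposed (convexHull ℝ ↑T))
    (hπ : ∀ x ∈ l.toExposed (convexHull ℝ ↑T), π (x - z) = 0) {q : V}
    (hq : q ∈ (faceFigure l π z T).exposedPoints ℝ) :
    IsExposed ℝ (convexHull ℝ ↑T) (faceOver l π z (convexHull ℝ ↑T) q) := by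
  obtain ⟨-, f, hf⟩ := hq
  rw [faceOver_eq_toExposed hz hπ f hf]
  exact ContinuousLinearMap.toExposed.isExposed

theorem injOn_faceOver :
    InjOn (faceOver l π z (convexHull ℝ ↑T)) ((faceFigure l π z T).extremePoints ℝ) := by
  intro q₁ hq₁ q₂ _ h
  obtain ⟨v, -, hlv, hv⟩ := exists_mem_faceOver_of_mem_extremePoints hq₁
  have hv₂ : v ∈ faceOver l π z (convexHull ℝ ↑T) q₂ := h ▸ hv
  exact smul_right_injective V (sub_ne_zero.2 hlv.ne') (hv.2.symm.trans hv₂.2)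

theorem finite_extremePoints_faceFigure : ((faceFigure l π z T).extremePoints ℝ).Finite :=
  ((T.finite_toSet.sep _).image _).subset extremePoints_convexHull_subset

theorem convexHull_extremePoints_faceFigure :
    convexHull ℝ ((faceFigure l π z T).extremePoints ℝ) = faceFigure l π z T :=
  (convex_convexHull ℝ _).convexHull_extremePoints_of_finite
    (((T.finite_toSet.sep _).image _).isCompact_convexHull ℝ) finite_extremePoints_faceFigure

theorem extremePoints_faceFigure_subset_exposedPoints :
    (faceFigure l π z T).extremePoints ℝ ⊆ (faceFigure l π z T).exposedPoints ℝ :=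
  ((T.finite_toSet.sep _).image _).extremePoints_convexHull_subset_exposedPoints

variable [FiniteDimensional ℝ E]

theorem finrank_vectorSpan_faceOver (hz : z ∈ l.toExposed (convexHull ℝ ↑T))
    (hker : (π : E →ₗ[ℝ] V).ker = vectorSpan ℝ (l.toExposed (convexHull ℝ ↑T))) {q : V}
    (hq : q ∈ (faceFigure l π z T).extremePoints ℝ) :
    finrank ℝ (vectorSpan ℝ (faceOver l π z (convexHull ℝ ↑T) q)) =
      finrank ℝ (vectorSpan ℝ (l.toExposed (convexHull ℝ ↑T))) + 1 := by
  have hπ := map_sub_eq_zero_of_ker_eq hker hz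
  have hFG := toExposed_subset_faceOver hz hπ q
  obtain ⟨v, -, hlv, hv⟩ := exists_mem_faceOver_of_mem_extremePoints hq
  have hq₀ : q ≠ 0 := by
    rintro rfl
    have hvz : v - z ∈ (π : E →ₗ[ℝ] V).ker := by simpa using hv.2
    rw [hker] at hvz
    have := vectorSpan_toExposed_le_ker l _ hvz
    simp only [LinearMap.mem_ker, ContinuousLinearMap.coe_coe, map_sub, sub_eq_zero] at this
    exact hlv.ne this
  have hmap : (vectorSpan ℝ (faceOver l π z (convexHull ℝ ↑T) q)).map (π : E →ₗ[ℝ] V) =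
      Submodule.span ℝ {q} := by
    rw [vectorSpan_eq_span_vsub_set_right ℝ (hFG hz), Submodule.map_span]
    refine le_antisymm (Submodule.span_le.2 ?_) (Submodule.span_le.2 ?_)
    · rintro _ ⟨_, ⟨p, hp, rfl⟩, rfl⟩
      exact Submodule.mem_span_singleton.2 ⟨_, hp.2.symm⟩
    · intro x hx
      have hvq : (l z - l v)⁻¹ • π (v - z) = q := by
        rw [hv.2, inv_smul_smul₀ (sub_ne_zero.2 hlv.ne')]
      rw [mem_singleton_iff.1 hx, SetLike.mem_coe]
      convert Submodule.smul_mem _ (l z - l v)⁻¹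
        (Submodule.subset_span (mem_image_of_mem _ (mem_image_of_mem _ hv))) using 1
      exact hvq.symm
  rw [← Submodule.finrank_map_add_finrank_ker (hker.trans_le (vectorSpan_mono ℝ hFG)), hmap,
    finrank_span_singleton hq₀, hker, add_comm]

theorem finrank_vectorSpan_le_add_ncard_extremePoints (hz : z ∈ l.toExposed (convexHull ℝ ↑T))
    (hker : (π : E →ₗ[ℝ] V).ker = vectorSpan ℝ (l.toExposed (convexHull ℝ ↑T))) :
    finrank ℝ (vectorSpan ℝ (convexHull ℝ (T : Set E))) ≤
      finrank ℝ (vectorSpan ℝ (l.toExposed (convexHull ℝ ↑T))) +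
        ((faceFigure l π z T).extremePoints ℝ).ncard := by
  have hπ := map_sub_eq_zero_of_ker_eq hker hz
  have hfin : ((faceFigure l π z T).extremePoints ℝ).Finite := finite_extremePoints_faceFigure
  have := FiniteDimensional.span_of_finite ℝ hfin
  have hmap : (vectorSpan ℝ (convexHull ℝ (T : Set E))).map (π : E →ₗ[ℝ] V) ≤
      Submodule.span ℝ ((faceFigure l π z T).extremePoints ℝ) := by
    rw [vectorSpan_eq_span_vsub_set_right ℝ hz.1, Submodule.map_span, Submodule.span_le]
    rintro _ ⟨_, ⟨p, hp, rfl⟩, rfl⟩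
    change π (p - z) ∈ _
    rw [← sub_smul_inv_smul_apply_sub hz hπ hp]
    rcases (hz.2 p hp).lt_or_eq with hlt | heq
    · refine Submodule.smul_mem _ _ (convexHull_min Submodule.subset_span (Submodule.convex _) ?_)
      rw [convexHull_extremePoints_faceFigure]
      exact inv_smul_apply_sub_mem_faceFigure hz hπ hp hlt
    · rw [heq, sub_self, zero_smul]
      exact Submodule.zero_mem _
  have hFP : vectorSpan ℝ (l.toExposed (convexHull ℝ ↑T)) ≤ vectorSpan ℝ (convexHull ℝ ↑T) :=
    vectorSpan_mono ℝ fun x hx => hx.1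
  rw [← Submodule.finrank_map_add_finrank_ker (hker.trans_le hFP), hker, add_comm]
  gcongr
  exact (Submodule.finrank_mono hmap).trans (finrank_span_le_ncard hfin)

end FaceFigure

theorem finrank_vectorSpan_sub_le_ncard_faces {E V : Type*} [NormedAddCommGroup E]
    [NormedSpace ℝ E] [FiniteDimensional ℝ E] [NormedAddCommGroup V] [NormedSpace ℝ V]
    (T : Finset E) {F : Set E} (hF : IsExposed ℝ (convexHull ℝ ↑T) F) (hFne : F.Nonempty)
    (π : E →L[ℝ] V) (hker : (π : E →ₗ[ℝ] V).ker = vectorSpan ℝ F) :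
    finrank ℝ (vectorSpan ℝ (convexHull ℝ (T : Set E))) - finrank ℝ (vectorSpan ℝ F) ≤
      {G | IsExposed ℝ (convexHull ℝ ↑T) G ∧ G.Nonempty ∧
        finrank ℝ (vectorSpan ℝ G) = finrank ℝ (vectorSpan ℝ F) + 1 ∧ F ⊆ G}.ncard := by
  obtain ⟨l, rfl⟩ := hF hFne
  obtain ⟨z, hz⟩ := hFne
  have hπ := map_sub_eq_zero_of_ker_eq hker hz
  calc _ ≤ ((faceFigure l π z T).extremePoints ℝ).ncard :=
        Nat.sub_le_iff_le_add'.2 (finrank_vectorSpan_le_add_ncard_extremePoints hz hker)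
    _ = (faceOver l π z (convexHull ℝ ↑T) '' (faceFigure l π z T).extremePoints ℝ).ncard :=
        injOn_faceOver.ncard_image.symm
    _ ≤ _ := by
      refine ncard_le_ncard (image_subset_iff.2 fun q hq => ?_)
        (T.finite_toSet.setOf_isExposed_convexHull.subset fun G hG => hG.1)
      have hFG := toExposed_subset_faceOver hz hπ q
      exact ⟨isExposed_faceOver hz hπ (extremePoints_faceFigure_subset_exposedPoints hq),
        ⟨z, hFG hz⟩, finrank_vectorSpan_faceOver hz hker hq, hFG⟩

theorem sdim_eq_finrank_vectorSpan {N : ℕ} (P : Set (EuclideanSpace ℝ (Fin N))) :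
    sdim P = finrank ℝ (vectorSpan ℝ P) := by
  rw [sdim, direction_affineSpan]

theorem stmt_7_general (d k : ℕ) {N : ℕ}
    (P : Set (EuclideanSpace ℝ (Fin N))) (hP : IsPolytope P) (hdim : sdim P = d)
    (F : Set (EuclideanSpace ℝ (Fin N))) (hF : IsFaceDim P F k) :
    d - k ≤ {G : Set (EuclideanSpace ℝ (Fin N)) | IsFaceDim P G (k + 1) ∧ F ⊆ G}.ncard := by
  obtain ⟨S, hS, rfl⟩ := hP
  obtain ⟨hFexp, hFne, rfl⟩ := hF
  subst hdim
  rw [← hS.coe_toFinset] at hFexp ⊢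
  have hker := (vectorSpan ℝ F)ᗮ.ker_orthogonalProjectionOnto.trans
    (Submodule.orthogonal_orthogonal _)
  simpa only [IsFaceDim, sdim_eq_finrank_vectorSpan, and_assoc] using
    finrank_vectorSpan_sub_le_ncard_faces hS.toFinset hFexp hFne _ hker

/-- Every `k`-dimensional face of a `d`-dimensional convex polytope `P`
(`0 ≤ k ≤ d-1`) is contained in at least `d-k` faces of `P` of dimension `k+1`. -/
theorem stmt_7 (d k : ℕ) (hk : k < d) {N : ℕ}
    (P : Set (EuclideanSpace ℝ (Fin N))) (hP : IsPolytope P) (hdim : sdim P = d)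
    (F : Set (EuclideanSpace ℝ (Fin N))) (hF : IsFaceDim P F k) :
    d - k ≤ {G : Set (EuclideanSpace ℝ (Fin N)) | IsFaceDim P G (k + 1) ∧ F ⊆ G}.ncard :=
  stmt_7_general d k P hP hdim F hF
end

section
/- Let P be a convex polytope of dimension d ≥ 5 and let U be a set of two-dimensional faces of P with |U| < 3d-6. Then at most two edges of P are contained in d-1 or more members of U. -/
open Set

/-!
Two distinct edges of a polytope span an affine subspace of dimension at least two, so a
2-face containing both is the unique face with that affine hull: two distinct edges lie in at
most one common 2-face. Three edges lying in at least `d - 1` members of `U` each would thus,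
by inclusion–exclusion, force `|U| ≥ 3(d - 1) - 3 = 3d - 6`.
-/

theorem Set.ncard_add_ncard_add_ncard_le {α : Type*} {s t r : Set α}
    (hs : s.Finite) (ht : t.Finite) (hr : r.Finite) :
    s.ncard + t.ncard + r.ncard ≤
      (s ∪ t ∪ r).ncard + (s ∩ t).ncard + (s ∩ r).ncard + (t ∩ r).ncard := by
  have hst := Set.ncard_union_add_ncard_inter s t hs ht
  have hstr := Set.ncard_union_add_ncard_inter (s ∪ t) r (hs.union ht) hr
  have hsplit : ((s ∪ t) ∩ r).ncard ≤ (s ∩ r).ncard + (t ∩ r).ncard := by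
    rw [Set.union_inter_distrib_right]
    exact Set.ncard_union_le _ _
  omega

section Exposed

variable {E : Type*} [AddCommGroup E] [Module ℝ E] [TopologicalSpace E]

theorem IsExposed.subset_of_subset_affineSpan {A F B : Set E} (hF : IsExposed ℝ A F)
    (hne : F.Nonempty) (hBA : B ⊆ A) (hBF : B ⊆ affineSpan ℝ F) : B ⊆ F := by
  obtain ⟨l, rfl⟩ := hF hne
  obtain ⟨x₀, hx₀A, hx₀max⟩ := hne
  have hconst : EqOn (l : E →ₗ[ℝ] ℝ).toAffineMap (AffineMap.const ℝ E (l x₀))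
      {x ∈ A | ∀ y ∈ A, l y ≤ l x} :=
    fun x hx => le_antisymm (hx₀max x hx.1) (hx.2 x₀ hx₀A)
  intro x hx
  refine ⟨hBA hx, fun y hy => ?_⟩
  have hlx : l x = l x₀ := AffineMap.eqOn_affineSpan hconst (hBF hx)
  exact hlx ▸ hx₀max y hy

theorem IsExposed.eq_of_affineSpan_eq {A F F' : Set E} (hF : IsExposed ℝ A F)
    (hF' : IsExposed ℝ A F') (hne : F.Nonempty) (hne' : F'.Nonempty)
    (hspan : affineSpan ℝ F = affineSpan ℝ F') : F = F' :=
  Subset.antisymm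
    (hF'.subset_of_subset_affineSpan hne' hF.subset (hspan ▸ subset_affineSpan ℝ F))
    (hF.subset_of_subset_affineSpan hne hF'.subset (hspan ▸ subset_affineSpan ℝ F'))

end Exposed

theorem AffineSubspace.eq_of_le_of_finrank_direction_le {k V P : Type*} [DivisionRing k]
    [AddCommGroup V] [Module k V] [AddTorsor V P] {s t : AffineSubspace k P}
    [FiniteDimensional k t.direction] (hle : s ≤ t) (hs : (s : Set P).Nonempty)
    (h : Module.finrank k t.direction ≤ Module.finrank k s.direction) : s = t :=
  eq_of_direction_eq_of_nonempty_of_le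
    (Submodule.eq_of_le_of_finrank_le (direction_le hle) h) hs hle

theorem affineSpan_eq_of_subset_of_sdim_le {N : ℕ} {F G : Set (EuclideanSpace ℝ (Fin N))}
    (hFG : F ⊆ G) (hF : F.Nonempty) (h : sdim G ≤ sdim F) :
    affineSpan ℝ F = affineSpan ℝ G :=
  AffineSubspace.eq_of_le_of_finrank_direction_le (affineSpan_mono ℝ hFG)
    ((affineSpan_nonempty ℝ).2 hF) h

theorem subsingleton_twoFaces_containing_edges {N : ℕ} {P e e' : Set (EuclideanSpace ℝ (Fin N))}
    (he : IsFaceDim P e 1) (he' : IsFaceDim P e' 1) (hne : e ≠ e') :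
    {u | IsFaceDim P u 2 ∧ e ⊆ u ∧ e' ⊆ u}.Subsingleton := by
  have hdim : 2 ≤ sdim (e ∪ e') := by
    by_contra! hle
    refine hne (he.1.eq_of_affineSpan_eq he'.1 he.2.1 he'.2.1 ?_)
    rw [affineSpan_eq_of_subset_of_sdim_le (subset_union_left (t := e')) he.2.1 (by rw [he.2.2]; omega),
      affineSpan_eq_of_subset_of_sdim_le (subset_union_right (s := e)) he'.2.1 (by rw [he'.2.2]; omega)]
  have hspan : ∀ u, IsFaceDim P u 2 → e ∪ e' ⊆ u → affineSpan ℝ (e ∪ e') = affineSpan ℝ u :=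
    fun u hu hsub => affineSpan_eq_of_subset_of_sdim_le hsub (he.2.1.mono subset_union_left)
      (hu.2.2 ▸ hdim)
  rintro u ⟨hu, hue, hue'⟩ u' ⟨hu', hu'e, hu'e'⟩
  exact hu.1.eq_of_affineSpan_eq hu'.1 hu.2.1 hu'.2.1
    ((hspan u hu (union_subset hue hue')).symm.trans (hspan u' hu' (union_subset hu'e hu'e')))

theorem stmt_12_general (d : ℕ) {N : ℕ}
    (P : Set (EuclideanSpace ℝ (Fin N)))
    (U : Set (Set (EuclideanSpace ℝ (Fin N)))) (hU : ∀ u ∈ U, IsFaceDim P u 2)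
    (hUfin : U.Finite) (hUcard : U.ncard < 3 * d - 6) :
    {e : Set (EuclideanSpace ℝ (Fin N)) |
      IsFaceDim P e 1 ∧ d - 1 ≤ {u ∈ U | e ⊆ u}.ncard}.ncard ≤ 2 := by
  by_contra! h
  obtain ⟨e₁, ⟨he₁, hc₁⟩, e₂, ⟨he₂, hc₂⟩, e₃, ⟨he₃, hc₃⟩, h₁₂, h₁₃, h₂₃⟩ :=
    (Set.two_lt_ncard (Set.finite_of_ncard_pos (Nat.zero_lt_of_lt h))).1 h
  have hinter : ∀ {e e'}, IsFaceDim P e 1 → IsFaceDim P e' 1 → e ≠ e' →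
      ({u ∈ U | e ⊆ u} ∩ {u ∈ U | e' ⊆ u}).ncard ≤ 1 := fun he he' hne =>
    have hsub := (subsingleton_twoFaces_containing_edges he he' hne).anti
      fun u hu => ⟨hU u hu.1.1, hu.1.2, hu.2.2⟩
    (Set.ncard_le_one hsub.finite).2 hsub
  have hfin : ∀ e, {u ∈ U | e ⊆ u}.Finite := fun e => hUfin.subset (sep_subset _ _)
  have hunion : ({u ∈ U | e₁ ⊆ u} ∪ {u ∈ U | e₂ ⊆ u} ∪ {u ∈ U | e₃ ⊆ u}).ncard ≤ U.ncard :=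
    Set.ncard_le_ncard (union_subset (union_subset (sep_subset _ _) (sep_subset _ _))
      (sep_subset _ _)) hUfin
  have := Set.ncard_add_ncard_add_ncard_le (hfin e₁) (hfin e₂) (hfin e₃)
  have := hinter he₁ he₂ h₁₂
  have := hinter he₁ he₃ h₁₃
  have := hinter he₂ he₃ h₂₃
  omega

/-- If `P` is a convex polytope of dimension `d ≥ 5` and `U` is a set of
two-dimensional faces of `P` with `|U| < 3d-6`, then at most two edges of `P`
are contained in `d-1` or more members of `U`. -/
theorem stmt_12 (d : ℕ) (hd : 5 ≤ d) {N : ℕ}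
    (P : Set (EuclideanSpace ℝ (Fin N))) (hP : IsPolytope P) (hdim : sdim P = d)
    (U : Set (Set (EuclideanSpace ℝ (Fin N)))) (hU : ∀ u ∈ U, IsFaceDim P u 2)
    (hUfin : U.Finite) (hUcard : U.ncard < 3 * d - 6) :
    {e : Set (EuclideanSpace ℝ (Fin N)) |
      IsFaceDim P e 1 ∧ d - 1 ≤ {u ∈ U | e ⊆ u}.ncard}.ncard ≤ 2 :=
  stmt_12_general d P U hU hUfin hUcard
end

section
/- Let P be a convex polytope of dimension d ≥ 5 and let U be a set of two-dimensional faces of P with |U| < 3d-6. Call a vertex of P bad if it belongs to at least 2d-4 members of U and call an edge of P bad if it is contained in at least d-1 members of U. Then any two distinct bad vertices of P are the endpoints of a common bad edge, P has at most two bad vertices, and every bad vertex is an endpoint of every bad edge. -/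
/-! Two distinct 2-faces of `P` meet in a face of dimension at most one. Hence two distinct points
lying in two common members of `U` span an edge, and that edge lies in every member of `U` through
both points; and three distinct vertices lie in at most one common member of `U`, because the
intersection of two such members would be collinear while no vertex lies between two others.
The rest is inclusion–exclusion: two bad vertices share at least `d - 1` members of `U`, a bad
vertex and a bad edge share at least two, and three bad vertices would force `|U| ≥ 3d - 5`. -/

open Set

theorem Set.ncard_add_ncard_le_ncard_add_ncard_inter {α : Type*} {A B S : Set α}
    (hS : S.Finite) (hA : A ⊆ S) (hB : B ⊆ S) :
    A.ncard + B.ncard ≤ S.ncard + (A ∩ B).ncard := by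
  rw [← ncard_union_add_ncard_inter A B (hS.subset hA) (hS.subset hB)]
  exact Nat.add_le_add_right (ncard_le_ncard (union_subset hA hB) hS) _

theorem Set.ncard_inter_add_ncard_inter_add_ncard_inter_le {α : Type*} {X Y Z S : Set α}
    (hS : S.Finite) (hX : X ⊆ S) (hY : Y ⊆ S) :
    (X ∩ Y).ncard + (X ∩ Z).ncard + (Y ∩ Z).ncard ≤ S.ncard + 2 * (X ∩ Y ∩ Z).ncard := by
  have hXY : X ∩ Y ⊆ S := inter_subset_left.trans hX
  have hXZ : X ∩ Z ⊆ S := inter_subset_left.trans hX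
  have hYZ : Y ∩ Z ⊆ S := inter_subset_left.trans hY
  have e₁ := ncard_union_add_ncard_inter _ _ (hS.subset hXY) (hS.subset hXZ)
  have e₂ := ncard_union_add_ncard_inter _ _ (hS.subset (union_subset hXY hXZ)) (hS.subset hYZ)
  have h₁ : X ∩ Y ∩ (X ∩ Z) = X ∩ Y ∩ Z := by
    ext; simp only [mem_inter_iff]; tauto
  have h₂ : (X ∩ Y ∪ X ∩ Z) ∩ (Y ∩ Z) = X ∩ Y ∩ Z := by
    ext; simp only [mem_inter_iff, mem_union]; tauto
  have hle := ncard_le_ncard (union_subset (union_subset hXY hXZ) hYZ) hS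
  rw [h₁] at e₁
  rw [h₂] at e₂
  omega

theorem sub_one_le_ncard_inter_of_le_ncard {α : Type*} {U A B : Set α} {d : ℕ}
    (hUfin : U.Finite) (hUcard : U.ncard < 3 * d - 6) (hA : A ⊆ U) (hB : B ⊆ U)
    (hAcard : 2 * d - 4 ≤ A.ncard) (hBcard : 2 * d - 4 ≤ B.ncard) : d - 1 ≤ (A ∩ B).ncard := by
  have := ncard_add_ncard_le_ncard_add_ncard_inter hUfin hA hB
  omega

theorem not_collinear_of_mem_extremePoints {𝕜 E : Type*} [Field 𝕜] [LinearOrder 𝕜]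
    [IsStrictOrderedRing 𝕜] [AddCommGroup E] [Module 𝕜 E] {A : Set E} {x y z : E}
    (hx : x ∈ A.extremePoints 𝕜) (hy : y ∈ A.extremePoints 𝕜) (hz : z ∈ A.extremePoints 𝕜)
    (hxy : x ≠ y) (hxz : x ≠ z) (hyz : y ≠ z) : ¬ Collinear 𝕜 ({x, y, z} : Set E) := by
  have between {a b c : E} (ha : a ∈ A) (hb : b ∈ A.extremePoints 𝕜) (hc : c ∈ A)
      (hab : a ≠ b) (hcb : c ≠ b) : ¬ Wbtw 𝕜 a b c := fun h =>
    hab ((mem_extremePoints.1 hb).2 a ha c hc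
      (mem_openSegment_of_ne_left_right hab hcb (mem_segment_iff_wbtw.2 h))).1
  intro hcol
  rcases hcol.wbtw_or_wbtw_or_wbtw with h | h | h
  · exact between hx.1 hy hz.1 hxy hyz.symm h
  · exact between hy.1 hz hx.1 hyz hxz h
  · exact between hz.1 hx hy.1 hxz.symm hxy.symm h

theorem IsExposed.eq_of_subset_affineSpan {E : Type*} [AddCommGroup E] [Module ℝ E]
    [TopologicalSpace E] {A F : Set E} (hAF : IsExposed ℝ A F) (hF : F.Nonempty)
    (hA : A ⊆ affineSpan ℝ F) : F = A := by
  refine hAF.subset.antisymm fun a ha => ?_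
  obtain ⟨l, rfl⟩ := hAF hF
  obtain ⟨f, hf⟩ := hF
  have hconst : EqOn (l : E →ₗ[ℝ] ℝ).toAffineMap (AffineMap.const ℝ E (l f))
      (affineSpan ℝ {x | x ∈ A ∧ ∀ y ∈ A, l y ≤ l x}) :=
    AffineMap.eqOn_affineSpan fun x hx => le_antisymm (hf.2 x hx.1) (hx.2 f hf.1)
  have hla : l a = l f := hconst (hA ha)
  exact ⟨ha, fun y hy => hla ▸ hf.2 y hy⟩

section Faces

variable {N : ℕ}

local notation "E" => EuclideanSpace ℝ (Fin N)

theorem sdim_mono_s13 {S T : Set E} (h : S ⊆ T) : sdim S ≤ sdim T :=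
  Submodule.finrank_mono (AffineSubspace.direction_le (affineSpan_mono ℝ h))

theorem one_le_sdim_iff_nontrivial {S : Set E} : 1 ≤ sdim S ↔ S.Nontrivial := by
  rw [sdim, direction_affineSpan, Submodule.one_le_finrank_iff, Ne,
    vectorSpan_eq_bot_iff_subsingleton, not_subsingleton_iff]

theorem subset_affineSpan_of_sdim_le {F A : Set E} (hFA : F ⊆ A) (hF : F.Nonempty)
    (h : sdim A ≤ sdim F) : A ⊆ affineSpan ℝ F := by
  have hdir : (affineSpan ℝ F).direction = (affineSpan ℝ A).direction :=
    Submodule.eq_of_le_of_finrank_eq (AffineSubspace.direction_le (affineSpan_mono ℝ hFA))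
      (le_antisymm (sdim_mono_s13 hFA) h)
  rw [AffineSubspace.eq_of_direction_eq_of_nonempty_of_le hdir (hF.mono (subset_affineSpan ℝ F))
    (affineSpan_mono ℝ hFA)]
  exact subset_affineSpan ℝ A

theorem IsExposed.eq_of_sdim_le {A F : Set E} (hAF : IsExposed ℝ A F) (hF : F.Nonempty)
    (h : sdim A ≤ sdim F) : F = A :=
  hAF.eq_of_subset_affineSpan hF (subset_affineSpan_of_sdim_le hAF.subset hF h)

theorem sdim_inter_lt_of_ne {P u u' : Set E} {k : ℕ} (hk : k ≠ 0) (hu : IsFaceDim P u k)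
    (hu' : IsFaceDim P u' k) (huu' : u ≠ u') : sdim (u ∩ u') < k := by
  by_contra! h
  have hne : (u ∩ u').Nonempty := (one_le_sdim_iff_nontrivial.1 (by omega)).nonempty
  have h₁ : u ∩ u' = u := ((hu.1.inter hu'.1).mono hu.1.subset inter_subset_left).eq_of_sdim_le
    hne (hu.2.2 ▸ h)
  have h₂ : u ∩ u' = u' := ((hu.1.inter hu'.1).mono hu'.1.subset inter_subset_right).eq_of_sdim_le
    hne (hu'.2.2 ▸ h)
  exact huu' (h₁.symm.trans h₂)

theorem IsFaceDim.subset_of_mem_of_mem {P e u : Set E} (he : IsFaceDim P e 1)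
    (hu : IsExposed ℝ P u) {x y : E} (hxy : x ≠ y) (hx : x ∈ u ∩ e) (hy : y ∈ u ∩ e) :
    e ⊆ u := by
  have h : u ∩ e = e := ((hu.inter he.1).mono he.1.subset inter_subset_right).eq_of_sdim_le
    ⟨x, hx⟩ (he.2.2 ▸ one_le_sdim_iff_nontrivial.2 ⟨x, hx, y, hy, hxy⟩)
  exact h ▸ inter_subset_left

theorem isFaceDim_inter_of_mem_of_mem {P u u' : Set E} (hu : IsFaceDim P u 2)
    (hu' : IsFaceDim P u' 2) (huu' : u ≠ u') {x y : E} (hxy : x ≠ y) (hx : x ∈ u ∩ u')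
    (hy : y ∈ u ∩ u') : IsFaceDim P (u ∩ u') 1 :=
  ⟨hu.1.inter hu'.1, ⟨x, hx⟩, by
    have := sdim_inter_lt_of_ne two_ne_zero hu hu' huu'
    have := one_le_sdim_iff_nontrivial.2 ⟨x, hx, y, hy, hxy⟩
    omega⟩

variable {d : ℕ} {P : Set (EuclideanSpace ℝ (Fin N))}
  {U : Set (Set (EuclideanSpace ℝ (Fin N)))}

theorem exists_isFaceDim_one_of_one_lt_ncard (hU : ∀ u ∈ U, IsFaceDim P u 2) {x y : E}
    (hxy : x ≠ y) (h : 1 < ({u ∈ U | x ∈ u} ∩ {u ∈ U | y ∈ u}).ncard) :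
    ∃ e, IsFaceDim P e 1 ∧ x ∈ e ∧ y ∈ e ∧
      {u ∈ U | x ∈ u} ∩ {u ∈ U | y ∈ u} ⊆ {u ∈ U | e ⊆ u} := by
  obtain ⟨u, hu, u', hu', huu'⟩ := (one_lt_ncard (finite_of_ncard_pos (by omega))).1 h
  have hx : x ∈ u ∩ u' := ⟨hu.1.2, hu'.1.2⟩
  have hy : y ∈ u ∩ u' := ⟨hu.2.2, hu'.2.2⟩
  have he := isFaceDim_inter_of_mem_of_mem (hU u hu.1.1) (hU u' hu'.1.1) huu' hxy hx hy
  exact ⟨u ∩ u', he, hx, hy, fun v hv =>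
    ⟨hv.1.1, he.subset_of_mem_of_mem (hU v hv.1.1).1 hxy ⟨hv.1.2, hx⟩ ⟨hv.2.2, hy⟩⟩⟩

theorem exists_bad_edge_of_bad_vertices (hU : ∀ u ∈ U, IsFaceDim P u 2) (hUfin : U.Finite)
    (hUcard : U.ncard < 3 * d - 6) {x y : E} (hxy : x ≠ y)
    (hx : 2 * d - 4 ≤ {u ∈ U | x ∈ u}.ncard) (hy : 2 * d - 4 ≤ {u ∈ U | y ∈ u}.ncard) :
    ∃ e, (IsFaceDim P e 1 ∧ d - 1 ≤ {u ∈ U | e ⊆ u}.ncard) ∧ x ∈ e ∧ y ∈ e := by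
  have hcommon := sub_one_le_ncard_inter_of_le_ncard hUfin hUcard (sep_subset U _)
    (sep_subset U _) hx hy
  obtain ⟨e, he, hxe, hye, hsub⟩ := exists_isFaceDim_one_of_one_lt_ncard hU hxy (by omega)
  exact ⟨e, ⟨he, hcommon.trans (ncard_le_ncard hsub (hUfin.subset (sep_subset U _)))⟩, hxe, hye⟩

theorem ncard_faces_containing_three_vertices_le_one (hU : ∀ u ∈ U, IsFaceDim P u 2)
    {x y z : E} (hx : IsExposed ℝ P {x}) (hy : IsExposed ℝ P {y}) (hz : IsExposed ℝ P {z})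
    (hxy : x ≠ y) (hxz : x ≠ z) (hyz : y ≠ z) :
    ({u ∈ U | x ∈ u} ∩ {u ∈ U | y ∈ u} ∩ {u ∈ U | z ∈ u}).ncard ≤ 1 := by
  by_contra! h
  obtain ⟨u, hu, v, hv, huv⟩ := (one_lt_ncard (finite_of_ncard_pos (by omega))).1 h
  have hcol : Collinear ℝ (u ∩ v) := collinear_iff_finrank_le_one.2 <| by
    rw [← direction_affineSpan]
    exact Nat.le_of_lt_succ (sdim_inter_lt_of_ne two_ne_zero (hU u hu.1.1.1) (hU v hv.1.1.1) huv)
  have hxyz : ({x, y, z} : Set E) ⊆ u ∩ v := by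
    rintro w (rfl | rfl | rfl)
    exacts [⟨hu.1.1.2, hv.1.1.2⟩, ⟨hu.1.2.2, hv.1.2.2⟩, ⟨hu.2.2, hv.2.2⟩]
  have extreme {w : E} (hw : IsExposed ℝ P {w}) : w ∈ P.extremePoints ℝ :=
    exposedPoints_subset_extremePoints (mem_exposedPoints_iff_exposed_singleton.2 hw)
  exact not_collinear_of_mem_extremePoints (extreme hx) (extreme hy) (extreme hz) hxy hxz hyz
    (hcol.subset hxyz)

theorem ncard_bad_vertices_le_two (hU : ∀ u ∈ U, IsFaceDim P u 2) (hUfin : U.Finite)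
    (hUcard : U.ncard < 3 * d - 6) :
    {x : E | IsFaceDim P {x} 0 ∧ 2 * d - 4 ≤ {u ∈ U | x ∈ u}.ncard}.ncard ≤ 2 := by
  by_contra! h
  obtain ⟨x, hx, y, hy, z, hz, hxy, hxz, hyz⟩ :=
    (two_lt_ncard (finite_of_ncard_pos (by omega))).1 h
  have hsum := ncard_inter_add_ncard_inter_add_ncard_inter_le (Z := {u ∈ U | z ∈ u}) hUfin
    (sep_subset U (x ∈ ·)) (sep_subset U (y ∈ ·))
  have hxyz := ncard_faces_containing_three_vertices_le_one hU hx.1.1 hy.1.1 hz.1.1 hxy hxz hyz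
  have hcommon {a b : E} (ha : 2 * d - 4 ≤ {u ∈ U | a ∈ u}.ncard)
      (hb : 2 * d - 4 ≤ {u ∈ U | b ∈ u}.ncard) :=
    sub_one_le_ncard_inter_of_le_ncard hUfin hUcard (sep_subset U _) (sep_subset U _) ha hb
  have := hcommon hx.2 hy.2
  have := hcommon hx.2 hz.2
  have := hcommon hy.2 hz.2
  omega

theorem mem_bad_edge_of_bad_vertex (hU : ∀ u ∈ U, IsFaceDim P u 2) (hUfin : U.Finite)
    (hUcard : U.ncard < 3 * d - 6) {x : E} (hx : 2 * d - 4 ≤ {u ∈ U | x ∈ u}.ncard)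
    {e : Set E} (he : IsFaceDim P e 1) (he' : d - 1 ≤ {u ∈ U | e ⊆ u}.ncard) : x ∈ e := by
  have hcount := ncard_add_ncard_le_ncard_add_ncard_inter hUfin (sep_subset U (x ∈ ·))
    (sep_subset U (e ⊆ ·))
  have h : 1 < ({u ∈ U | x ∈ u} ∩ {u ∈ U | e ⊆ u}).ncard := by omega
  obtain ⟨u, hu, u', hu', huu'⟩ := (one_lt_ncard (finite_of_ncard_pos (by omega))).1 h
  obtain ⟨a, ha, b, hb, hab⟩ := one_le_sdim_iff_nontrivial.1 he.2.2.ge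
  have ha' : a ∈ u ∩ u' := ⟨hu.2.2 ha, hu'.2.2 ha⟩
  have hb' : b ∈ u ∩ u' := ⟨hu.2.2 hb, hu'.2.2 hb⟩
  have hg := isFaceDim_inter_of_mem_of_mem (hU u hu.1.1) (hU u' hu'.1.1) huu' hab ha' hb'
  exact hg.subset_of_mem_of_mem he.1 hab ⟨ha, ha'⟩ ⟨hb, hb'⟩ ⟨hu.1.2, hu'.1.2⟩

end Faces

theorem stmt_13_general (d : ℕ) {N : ℕ}
    (P : Set (EuclideanSpace ℝ (Fin N)))
    (U : Set (Set (EuclideanSpace ℝ (Fin N)))) (hU : ∀ u ∈ U, IsFaceDim P u 2)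
    (hUfin : U.Finite) (hUcard : U.ncard < 3 * d - 6) :
    (∀ x y : EuclideanSpace ℝ (Fin N),
      (IsFaceDim P {x} 0 ∧ 2 * d - 4 ≤ {u ∈ U | x ∈ u}.ncard) →
      (IsFaceDim P {y} 0 ∧ 2 * d - 4 ≤ {u ∈ U | y ∈ u}.ncard) → x ≠ y →
      ∃ e : Set (EuclideanSpace ℝ (Fin N)),
        (IsFaceDim P e 1 ∧ d - 1 ≤ {u ∈ U | e ⊆ u}.ncard) ∧ x ∈ e ∧ y ∈ e) ∧
    {x : EuclideanSpace ℝ (Fin N) |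
      IsFaceDim P {x} 0 ∧ 2 * d - 4 ≤ {u ∈ U | x ∈ u}.ncard}.ncard ≤ 2 ∧
    (∀ x : EuclideanSpace ℝ (Fin N),
      (IsFaceDim P {x} 0 ∧ 2 * d - 4 ≤ {u ∈ U | x ∈ u}.ncard) →
      ∀ e : Set (EuclideanSpace ℝ (Fin N)),
        (IsFaceDim P e 1 ∧ d - 1 ≤ {u ∈ U | e ⊆ u}.ncard) → x ∈ e) := by
  exact ⟨fun x y hx hy hxy => exists_bad_edge_of_bad_vertices hU hUfin hUcard hxy hx.2 hy.2,
    ncard_bad_vertices_le_two hU hUfin hUcard,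
    fun x hx e he => mem_bad_edge_of_bad_vertex hU hUfin hUcard hx.2 he.1 he.2⟩

/-- Let `P` be a convex polytope of dimension `d ≥ 5` and `U` a set of
two-dimensional faces of `P` with `|U| < 3d-6`.  Call a vertex `x` bad if it
belongs to at least `2d-4` members of `U`, and an edge bad if it is contained
in at least `d-1` members of `U`.  Then any two distinct bad vertices are the
endpoints of a common bad edge, there are at most two bad vertices, and every
bad vertex is an endpoint of every bad edge. -/
theorem stmt_13 (d : ℕ) (hd : 5 ≤ d) {N : ℕ}
    (P : Set (EuclideanSpace ℝ (Fin N))) (hP : IsPolytope P) (hdim : sdim P = d)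
    (U : Set (Set (EuclideanSpace ℝ (Fin N)))) (hU : ∀ u ∈ U, IsFaceDim P u 2)
    (hUfin : U.Finite) (hUcard : U.ncard < 3 * d - 6) :
    (∀ x y : EuclideanSpace ℝ (Fin N),
      (IsFaceDim P {x} 0 ∧ 2 * d - 4 ≤ {u ∈ U | x ∈ u}.ncard) →
      (IsFaceDim P {y} 0 ∧ 2 * d - 4 ≤ {u ∈ U | y ∈ u}.ncard) → x ≠ y →
      ∃ e : Set (EuclideanSpace ℝ (Fin N)),
        (IsFaceDim P e 1 ∧ d - 1 ≤ {u ∈ U | e ⊆ u}.ncard) ∧ x ∈ e ∧ y ∈ e) ∧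
    {x : EuclideanSpace ℝ (Fin N) |
      IsFaceDim P {x} 0 ∧ 2 * d - 4 ≤ {u ∈ U | x ∈ u}.ncard}.ncard ≤ 2 ∧
    (∀ x : EuclideanSpace ℝ (Fin N),
      (IsFaceDim P {x} 0 ∧ 2 * d - 4 ≤ {u ∈ U | x ∈ u}.ncard) →
      ∀ e : Set (EuclideanSpace ℝ (Fin N)),
        (IsFaceDim P e 1 ∧ d - 1 ≤ {u ∈ U | e ⊆ u}.ncard) → x ∈ e) :=
  stmt_13_general d P U hU hUfin hUcard
end

section
/- Let P be a convex polytope of dimension d, let 3 ≤ k ≤ d-3, and let U be a set of k-dimensional faces of P with |U| < (k+1)(d-k). Let V be the set of vertices of P that belong to at least k(d-k) faces in U. Then any k+1 vertices in V are affinely dependent; consequently the affine span of V has dimension at most k-1. -/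
open Set

/-!
Suppose `v₀, …, v_k` are affinely independent vertices, each lying in at least `k(d-k)` faces
of `U`. A `k`-face is cut out of `P` by its affine span, so at most one face of `U` contains all
of them, and every other face contains at most `k` of them. Counting incidences,
`(k+1)·k(d-k) ≤ k|U| + 1 ≤ k((k+1)(d-k) - 1) + 1`, which is impossible once `k ≥ 2`.
The dimension bound follows by extracting an affinely independent subset of `V` with the same
affine span.
-/

open Finset in
theorem sum_ncard_setOf_mem_le {α : Type*} {k : ℕ} {U : Set (Set α)} (hU : U.Finite)
    (v : Fin (k + 1) → α) (hunique : {u ∈ U | ∀ i, v i ∈ u}.Subsingleton) :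
    ∑ i, {u ∈ U | v i ∈ u}.ncard ≤ k * U.ncard + 1 := by
  classical
  lift U to Finset (Set α) using hU
  have hcard_mem (u : Set α) : #{i | v i ∈ u} ≤ k + if ∀ i, v i ∈ u then 1 else 0 := by
    split_ifs with h
    · exact (card_filter_le _ _).trans (by simp)
    · obtain ⟨i, hi⟩ := not_forall.1 h
      simpa using Finset.card_lt_card (filter_ssubset.2 ⟨i, mem_univ i, hi⟩)
  have hunique' : #{u ∈ U | ∀ i, v i ∈ u} ≤ 1 :=
    card_le_one.2 fun u hu u' hu' => hunique (by simpa using hu) (by simpa using hu')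
  calc ∑ i, {u ∈ (U : Set (Set α)) | v i ∈ u}.ncard
      = ∑ i, #{u ∈ U | v i ∈ u} := by simp [← coe_filter]
    _ = ∑ u ∈ U, #{i | v i ∈ u} :=
        sum_card_bipartiteAbove_eq_sum_card_bipartiteBelow (fun i u => v i ∈ u)
    _ ≤ ∑ u ∈ U, (k + if ∀ i, v i ∈ u then 1 else 0) := sum_le_sum fun u _ => hcard_mem u
    _ = k * #U + #{u ∈ U | ∀ i, v i ∈ u} := by
        rw [sum_add_distrib, sum_const, smul_eq_mul, mul_comm, card_filter]
    _ ≤ k * (U : Set (Set α)).ncard + 1 := by rw [ncard_coe_finset]; omega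

section Exposed

variable {𝕜 E : Type*} [TopologicalSpace 𝕜] [AddCommGroup E] [TopologicalSpace E]

theorem IsExposed.eq_inter_affineSpan [Ring 𝕜] [PartialOrder 𝕜] [Module 𝕜 E] {A B : Set E}
    (hAB : IsExposed 𝕜 A B) (hB : B.Nonempty) : B = A ∩ affineSpan 𝕜 B := by
  obtain ⟨l, rfl⟩ := hAB hB
  obtain ⟨x₀, hx₀A, hx₀max⟩ := hB
  have hconst : EqOn l.toLinearMap.toAffineMap (AffineMap.const 𝕜 E (l x₀))
      {x ∈ A | ∀ y ∈ A, l y ≤ l x} := fun x hx =>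
    le_antisymm (hx₀max x hx.1) (hx.2 x₀ hx₀A)
  refine Subset.antisymm (fun x hx => ⟨hx.1, subset_affineSpan 𝕜 _ hx⟩) ?_
  rintro x ⟨hxA, hxspan⟩
  have hlx : l x = l x₀ := AffineMap.eqOn_affineSpan hconst hxspan
  exact ⟨hxA, fun y hy => (hx₀max y hy).trans hlx.ge⟩

theorem IsExposed.eq_of_affineIndependent [DivisionRing 𝕜] [PartialOrder 𝕜] [Module 𝕜 E]
    [FiniteDimensional 𝕜 E] {ι : Type*} [Fintype ι] {A B C : Set E} (hB : IsExposed 𝕜 A B)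
    (hC : IsExposed 𝕜 A C) {v : ι → E} (hv : AffineIndependent 𝕜 v) (hvB : range v ⊆ B)
    (hvC : range v ⊆ C)
    (hBdim : Fintype.card ι = Module.finrank 𝕜 (affineSpan 𝕜 B).direction + 1)
    (hCdim : Fintype.card ι = Module.finrank 𝕜 (affineSpan 𝕜 C).direction + 1) : B = C := by
  have hne : (range v).Nonempty := by
    have : Nonempty ι := Fintype.card_pos_iff.1 (by omega)
    exact range_nonempty v
  have hspan {F : Set E} (hF : IsExposed 𝕜 A F) (hvF : range v ⊆ F)
      (hdim : Fintype.card ι = Module.finrank 𝕜 (affineSpan 𝕜 F).direction + 1) :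
      F = A ∩ affineSpan 𝕜 (range v) :=
    calc F = A ∩ affineSpan 𝕜 F := hF.eq_inter_affineSpan (hne.mono hvF)
      _ = A ∩ affineSpan 𝕜 (range v) := by
        rw [hv.affineSpan_eq_of_le_of_card_eq_finrank_add_one (affineSpan_mono 𝕜 hvF) hdim]
  rw [hspan hB hvB hBdim, hspan hC hvC hCdim]

end Exposed

theorem finrank_direction_affineSpan_le_of_forall_not_affineIndependent {k V P : Type*}
    [DivisionRing k] [AddCommGroup V] [Module k V] [AddTorsor V P] [FiniteDimensional k V]
    {s : Set P} {n : ℕ} (h : ∀ v : Fin (n + 1) → P, (∀ i, v i ∈ s) → ¬ AffineIndependent k v) :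
    Module.finrank k (affineSpan k s).direction ≤ n - 1 := by
  obtain ⟨t, hts, hspan, hind⟩ := exists_affineIndependent k V s
  have : Finite t := finite_of_fin_dim_affineIndependent k hind
  cases nonempty_fintype t
  have hcard : Fintype.card t ≤ n := by
    by_contra! hlt
    obtain ⟨f⟩ := Function.Embedding.nonempty_of_card_le
      (show Fintype.card (Fin (n + 1)) ≤ Fintype.card t by simpa using hlt)
    exact h (fun i => f i) (fun i => hts (f i).2) (hind.comp_embedding f)
  rw [← hspan, direction_affineSpan]
  rcases t.eq_empty_or_nonempty with rfl | ⟨p, hp⟩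
  · rw [vectorSpan_empty, finrank_bot]
    exact Nat.zero_le _
  · have hpos : 0 < Fintype.card t := Fintype.card_pos_iff.2 ⟨⟨p, hp⟩⟩
    have := finrank_vectorSpan_range_le k ((↑) : t → P) (n := Fintype.card t - 1)
      (show Fintype.card t = Fintype.card t - 1 + 1 by omega)
    rw [Subtype.range_coe] at this
    omega

theorem stmt_14_general (d k : ℕ) (hk3 : 3 ≤ k) {N : ℕ}
    (P : Set (EuclideanSpace ℝ (Fin N)))
    (U : Set (Set (EuclideanSpace ℝ (Fin N)))) (hU : ∀ u ∈ U, IsFaceDim P u k)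
    (hUfin : U.Finite) (hUcard : U.ncard < (k + 1) * (d - k)) :
    (∀ v : Fin (k + 1) → EuclideanSpace ℝ (Fin N),
      (∀ i, IsFaceDim P {v i} 0 ∧ k * (d - k) ≤ {u ∈ U | v i ∈ u}.ncard) →
      ¬ AffineIndependent ℝ v) ∧
    sdim {x : EuclideanSpace ℝ (Fin N) |
      IsFaceDim P {x} 0 ∧ k * (d - k) ≤ {u ∈ U | x ∈ u}.ncard} ≤ k - 1 := by
  have no_indep : ∀ v : Fin (k + 1) → EuclideanSpace ℝ (Fin N),
      (∀ i, IsFaceDim P {v i} 0 ∧ k * (d - k) ≤ {u ∈ U | v i ∈ u}.ncard) →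
      ¬ AffineIndependent ℝ v := by
    intro v hv hind
    have hunique : {u ∈ U | ∀ i, v i ∈ u}.Subsingleton := fun u hu u' hu' =>
      (hU u hu.1).1.eq_of_affineIndependent (hU u' hu'.1).1 hind (range_subset_iff.2 hu.2)
        (range_subset_iff.2 hu'.2) (by rw [Fintype.card_fin, ← (hU u hu.1).2.2]; rfl)
        (by rw [Fintype.card_fin, ← (hU u' hu'.1).2.2]; rfl)
    have hupper := sum_ncard_setOf_mem_le hUfin v hunique
    have hlower : ∑ _i : Fin (k + 1), k * (d - k) ≤ ∑ i, {u ∈ U | v i ∈ u}.ncard :=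
      Finset.sum_le_sum fun i _ => (hv i).2
    simp only [Finset.sum_const, Finset.card_univ, Fintype.card_fin, smul_eq_mul] at hlower
    nlinarith
  exact ⟨no_indep, finrank_direction_affineSpan_le_of_forall_not_affineIndependent no_indep⟩

/-- Let `P` be a `d`-dimensional convex polytope, `3 ≤ k ≤ d-3`, and `U` a set
of `k`-dimensional faces of `P` with `|U| < (k+1)(d-k)`.  Let `V` be the set of
vertices of `P` belonging to at least `k(d-k)` faces in `U`.  Then any `k+1`
vertices in `V` are affinely dependent, and consequently the affine span of `V`
has dimension at most `k-1`. -/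
theorem stmt_14 (d k : ℕ) (hk3 : 3 ≤ k) (hkd : k + 3 ≤ d) {N : ℕ}
    (P : Set (EuclideanSpace ℝ (Fin N))) (hP : IsPolytope P) (hdim : sdim P = d)
    (U : Set (Set (EuclideanSpace ℝ (Fin N)))) (hU : ∀ u ∈ U, IsFaceDim P u k)
    (hUfin : U.Finite) (hUcard : U.ncard < (k + 1) * (d - k)) :
    (∀ v : Fin (k + 1) → EuclideanSpace ℝ (Fin N),
      (∀ i, IsFaceDim P {v i} 0 ∧ k * (d - k) ≤ {u ∈ U | v i ∈ u}.ncard) →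
      ¬ AffineIndependent ℝ v) ∧
    sdim {x : EuclideanSpace ℝ (Fin N) |
      IsFaceDim P {x} 0 ∧ k * (d - k) ≤ {u ∈ U | x ∈ u}.ncard} ≤ k - 1 :=
  stmt_14_general d k hk3 P U hU hUfin hUcard
end
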